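/- arXiv:1602.08072 — 13 statements merged into one kernel-verified Lean document; each statement's English description precedes it below -/
import Mathlib

section
/- Let A be a unital C*-algebra, let n ≥ 1, and let a₁, …, aₙ ∈ A be contractions (‖aᵢ‖ ≤ 1 for every i). The following are equivalent: (1) there exist x₁, …, xₙ ∈ A with x₁a₁ + ⋯ + xₙaₙ = 1; (2) a₁*a₁ + ⋯ + aₙ*aₙ is invertible in A; (3) there exist v₁, …, vₙ ∈ A and a positive invertible element c ∈ A with ‖c‖ ≤ √n such that aᵢ = vᵢc for all i and v₁*v₁ + ⋯ + vₙ*vₙ = 1; (4) there exist v₁, …, vₙ ∈ A and a positive invertible element c ∈ A with ‖c‖ ≤ √n such that aᵢ = vᵢc for all i and ‖v₁*v₁ + ⋯ + vₙ*vₙ − 1‖ < 1. -/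
/-!
With `b = ∑ aᵢ* aᵢ`: if `∑ xᵢ aᵢ = 1`, completing the square gives
`0 ≤ ∑ (t aᵢ - xᵢ*)* (t aᵢ - xᵢ*) = t² b - 2t + ∑ xᵢ xᵢ*`, so for `t` large compared with
`‖∑ xᵢ xᵢ*‖` the element `b` dominates a positive scalar and is invertible; conversely
`xᵢ = b⁻¹ aᵢ*` works. If `b` is invertible, the polar decomposition `c = b^{1/2}`, `vᵢ = aᵢ c⁻¹`
gives `∑ vᵢ* vᵢ = 1` and `‖c‖² = ‖b‖ ≤ n`. Finally `b = c* (∑ vᵢ* vᵢ) c`, and an element at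
distance less than `1` from `1` is invertible.
-/

open Finset

section StarRing

variable {ι R : Type*} [Fintype ι]

lemma sum_star_mul_mul_self [Semiring R] [StarRing R] (v : ι → R) (c : R) :
    ∑ i, star (v i * c) * (v i * c) = star c * (∑ i, star (v i) * v i) * c := by
  simp only [star_mul, mul_sum, sum_mul, mul_assoc]

lemma isUnit_sum_star_mul_self_of_eq_mul [Semiring R] [StarRing R] {a v : ι → R} {c : R}
    (hav : ∀ i, a i = v i * c) (hc : IsUnit c) (hv : IsUnit (∑ i, star (v i) * v i)) :
    IsUnit (∑ i, star (a i) * a i) := by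
  simp only [hav, sum_star_mul_mul_self]
  exact (hc.star.mul hv).mul hc

lemma sum_star_mul_self_nonneg [NonUnitalSemiring R] [PartialOrder R] [StarRing R]
    [StarOrderedRing R] (a : ι → R) : 0 ≤ ∑ i, star (a i) * a i :=
  sum_nonneg fun _ _ => star_mul_self_nonneg _

lemma norm_sum_star_mul_self_le_card [NonUnitalNormedRing R] [StarRing R] [CStarRing R]
    {a : ι → R} (ha : ∀ i, ‖a i‖ ≤ 1) :
    ‖∑ i, star (a i) * a i‖ ≤ Fintype.card ι :=
  calc ‖∑ i, star (a i) * a i‖ ≤ ∑ i, ‖star (a i) * a i‖ := norm_sum_le _ _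
    _ = ∑ i, ‖a i‖ * ‖a i‖ := by simp only [CStarRing.norm_star_mul_self]
    _ ≤ ∑ _i : ι, (1 : ℝ) := sum_le_sum fun i _ => mul_le_one₀ (ha i) (norm_nonneg _) (ha i)
    _ = Fintype.card ι := by simp

end StarRing

section CStarAlgebra

variable {ι A : Type*} [Fintype ι] [CStarAlgebra A] [PartialOrder A] [StarOrderedRing A]

lemma CStarAlgebra.isUnit_of_one_le_smul {b : A} {r : ℝ} (h : 1 ≤ r • b) : IsUnit b := by
  have hrb : IsUnit (algebraMap ℝ A r * b) := by
    rw [← Algebra.smul_def]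
    exact CStarAlgebra.isUnit_of_le 1 h
  exact ((Algebra.commute_algebraMap_left r b).isUnit_mul_iff.mp hrb).2

lemma smul_one_sub_sum_mul_star_le_of_sum_mul_eq_one {x a : ι → A}
    (h : ∑ i, x i * a i = 1) (t : ℝ) :
    (2 * t) • (1 : A) - ∑ i, x i * star (x i) ≤ t ^ 2 • ∑ i, star (a i) * a i := by
  have hsq : 0 ≤ ∑ i, star (t • a i - star (x i)) * (t • a i - star (x i)) :=
    sum_nonneg fun _ _ => star_mul_self_nonneg _
  have hstar : ∑ i, star (a i) * star (x i) = 1 := by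
    simpa only [star_sum, star_mul, star_one] using congrArg star h
  have expand : ∑ i, star (t • a i - star (x i)) * (t • a i - star (x i)) =
      t ^ 2 • ∑ i, star (a i) * a i - t • ∑ i, star (a i) * star (x i)
        - t • ∑ i, x i * a i + ∑ i, x i * star (x i) := by
    simp only [star_sub, star_smul, star_trivial, star_star, sub_mul, mul_sub,
      smul_mul_assoc, mul_smul_comm, sum_sub_distrib, ← smul_sum]
    rw [smul_sub, smul_smul, ← sq]
    abel
  rw [expand, hstar, h] at hsq
  rw [two_mul, add_smul, ← sub_nonneg]
  convert hsq using 1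
  abel

lemma isUnit_sum_star_mul_self_of_sum_mul_eq_one {x a : ι → A} (h : ∑ i, x i * a i = 1) :
    IsUnit (∑ i, star (a i) * a i) := by
  set X := ∑ i, x i * star (x i)
  have hX : X ≤ algebraMap ℝ A ‖X‖ := IsSelfAdjoint.le_algebraMap_norm_self
    (.of_nonneg (sum_nonneg fun _ _ => mul_star_self_nonneg _))
  refine CStarAlgebra.isUnit_of_one_le_smul (r := ((‖X‖ + 1) / 2) ^ 2) (le_trans ?_
    (smul_one_sub_sum_mul_star_le_of_sum_mul_eq_one h _))
  rw [Algebra.algebraMap_eq_smul_one] at hX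
  have : (2 * ((‖X‖ + 1) / 2)) • (1 : A) = ‖X‖ • 1 + 1 := by
    rw [mul_div_cancel₀ _ two_ne_zero, add_smul, one_smul]
  rw [this, add_sub_right_comm]
  exact le_add_of_nonneg_left (sub_nonneg.mpr hX)

lemma exists_eq_mul_sqrt_of_isUnit_sum_star_mul_self {a : ι → A}
    (hb : IsUnit (∑ i, star (a i) * a i)) :
    ∃ v : ι → A, (∀ i, a i = v i * CFC.sqrt (∑ i, star (a i) * a i)) ∧
      ∑ i, star (v i) * v i = 1 := by
  set c := CFC.sqrt (∑ i, star (a i) * a i)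
  obtain ⟨u, hu⟩ : IsUnit c := (CFC.isUnit_sqrt_iff _ (sum_star_mul_self_nonneg a)).mpr hb
  have hcc : star c * c = ∑ i, star (a i) * a i := by
    rw [(CFC.sqrt_nonneg _).star_eq, CFC.sqrt_mul_sqrt_self _ (sum_star_mul_self_nonneg a)]
  refine ⟨fun i => a i * ↑u⁻¹, fun i => by simp [← hu, mul_assoc], ?_⟩
  rw [sum_star_mul_mul_self, ← hcc, ← mul_assoc, ← star_mul, mul_assoc, ← hu, u.mul_inv, star_one,
    one_mul]

end CStarAlgebra

theorem stmt_0_general {A : Type*} [CStarAlgebra A] (n : ℕ)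
    (a : Fin n → A) (ha : ∀ i, ‖a i‖ ≤ 1) :
    [ (∃ x : Fin n → A, ∑ i, x i * a i = 1),
      IsUnit (∑ i, star (a i) * a i),
      (∃ (v : Fin n → A) (c : A), (∃ y : A, c = star y * y) ∧ IsUnit c ∧
        ‖c‖ ≤ Real.sqrt n ∧ (∀ i, a i = v i * c) ∧ (∑ i, star (v i) * v i) = 1),
      (∃ (v : Fin n → A) (c : A), (∃ y : A, c = star y * y) ∧ IsUnit c ∧
        ‖c‖ ≤ Real.sqrt n ∧ (∀ i, a i = v i * c) ∧
        ‖(∑ i, star (v i) * v i) - 1‖ < 1) ].TFAE := by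
  let := CStarAlgebra.spectralOrder A
  have := CStarAlgebra.spectralOrderedRing A
  tfae_have 1 → 2 := fun ⟨x, hx⟩ => isUnit_sum_star_mul_self_of_sum_mul_eq_one hx
  tfae_have 2 → 1 := fun hb =>
    ⟨fun i => ↑hb.unit⁻¹ * star (a i), by simp only [mul_assoc, ← mul_sum, IsUnit.val_inv_mul]⟩
  tfae_have 2 → 3 := by
    intro hb
    have hb₀ := sum_star_mul_self_nonneg a
    obtain ⟨v, hav, hv⟩ := exists_eq_mul_sqrt_of_isUnit_sum_star_mul_self hb
    refine ⟨v, _, CStarAlgebra.nonneg_iff_eq_star_mul_self.mp (CFC.sqrt_nonneg _),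
      (CFC.isUnit_sqrt_iff _ hb₀).mpr hb, ?_, hav, hv⟩
    rw [CFC.norm_sqrt _ hb₀]
    exact Real.sqrt_le_sqrt (by simpa using norm_sum_star_mul_self_le_card ha)
  tfae_have 3 → 4 := fun ⟨v, c, hc₀, hc, hcn, hav, hv⟩ =>
    ⟨v, c, hc₀, hc, hcn, hav, by simp [hv]⟩
  tfae_have 4 → 2 := by
    rintro ⟨v, c, -, hc, -, hav, hv⟩
    refine isUnit_sum_star_mul_self_of_eq_mul hav hc ?_
    have hv' : ‖1 - ∑ i, star (v i) * v i‖ < 1 := by rwa [norm_sub_rev]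
    simpa only [Units.val_oneSub, sub_sub_cancel] using (Units.oneSub _ hv').isUnit
  tfae_finish

/-- Lemma on generating tuples in a unital C*-algebra (stable rank characterization). -/
theorem stmt_0 {A : Type*} [CStarAlgebra A] (n : ℕ) (hn : 1 ≤ n)
    (a : Fin n → A) (ha : ∀ i, ‖a i‖ ≤ 1) :
    [ (∃ x : Fin n → A, ∑ i, x i * a i = 1),
      IsUnit (∑ i, star (a i) * a i),
      (∃ (v : Fin n → A) (c : A), (∃ y : A, c = star y * y) ∧ IsUnit c ∧
        ‖c‖ ≤ Real.sqrt n ∧ (∀ i, a i = v i * c) ∧ (∑ i, star (v i) * v i) = 1),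
      (∃ (v : Fin n → A) (c : A), (∃ y : A, c = star y * y) ∧ IsUnit c ∧
        ‖c‖ ≤ Real.sqrt n ∧ (∀ i, a i = v i * c) ∧
        ‖(∑ i, star (v i) * v i) - 1‖ < 1) ].TFAE :=
  stmt_0_general n a ha
end

section
/- Let A be a commutative unital C*-algebra and let a₁, …, aₙ ∈ A be self-adjoint elements such that a₁² + ⋯ + aₙ² is invertible. Then for every ε > 0 there exist self-adjoint elements b₁, …, bₙ ∈ A such that ‖aᵢ − bᵢ‖ ≤ ε for all i, the element b₁² + ⋯ + bₙ² is invertible, and its inverse has norm at most ε⁻². -/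
set_option maxHeartbeats 1000000


/-- In a commutative unital C*-algebra, a tuple of self-adjoint elements with invertible
sum of squares can be perturbed so that the inverse of the sum of squares has controlled norm. -/
theorem stmt_2 {A : Type*} [CommCStarAlgebra A] (n : ℕ) (a : Fin n → A)
    (hsa : ∀ i, IsSelfAdjoint (a i)) (hinv : IsUnit (∑ i, a i ^ 2)) :
    ∀ ε > (0 : ℝ), ∃ b : Fin n → A, (∀ i, IsSelfAdjoint (b i)) ∧
      (∀ i, ‖a i - b i‖ ≤ ε) ∧
      ∃ u : Aˣ, (u : A) = ∑ i, b i ^ 2 ∧ ‖((u⁻¹ : Aˣ) : A)‖ ≤ (ε ^ 2)⁻¹ := by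
  intro ε hε
  letI : PartialOrder A := CStarAlgebra.spectralOrder A
  haveI : StarOrderedRing A := CStarAlgebra.spectralOrderedRing A
  set s : A := ∑ i, a i ^ 2 with hs_def
  have hsq : ∀ i, (0:A) ≤ a i ^ 2 := fun i => by
    have h : a i ^ 2 = star (a i) * a i := by rw [sq, (hsa i).star_eq]
    rw [h]; exact star_mul_self_nonneg _
  have hs_nonneg : (0:A) ≤ s := Finset.sum_nonneg fun i _ => hsq i
  have hs_sa : IsSelfAdjoint s := .of_nonneg hs_nonneg
  have hspec : ∀ t ∈ spectrum ℝ s, 0 < t := by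
    intro t ht
    have h0 : t ≠ 0 := fun h => spectrum.zero_notMem ℝ hinv (h ▸ ht)
    exact lt_of_le_of_ne (spectrum_nonneg_of_nonneg hs_nonneg ht) (Ne.symm h0)
  -- the perturbing function
  set f : ℝ → ℝ := fun t => max 1 (ε / Real.sqrt t) with hf_def
  have hsqrt_ne : ∀ t ∈ spectrum ℝ s, Real.sqrt t ≠ 0 :=
    fun t ht => ne_of_gt (Real.sqrt_pos.mpr (hspec t ht))
  have hf_cont : ContinuousOn f (spectrum ℝ s) :=
    ContinuousOn.sup continuousOn_const
      (continuousOn_const.div Real.continuous_sqrt.continuousOn hsqrt_ne)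
  have hf_one : ∀ t, 1 ≤ f t := fun t => le_max_left _ _
  -- key pointwise facts
  have hkey1 : ∀ t ∈ spectrum ℝ s, ε ^ 2 ≤ t * f t ^ 2 := by
    intro t ht
    have ht' := hspec t ht
    have hst : Real.sqrt t ^ 2 = t := Real.sq_sqrt ht'.le
    have hstp : 0 < Real.sqrt t := Real.sqrt_pos.mpr ht'
    rcases le_total ε (Real.sqrt t) with h | h
    · have h1 : ε ^ 2 ≤ t := by nlinarith
      have hf2 : 1 ≤ f t ^ 2 := one_le_pow₀ (hf_one t)
      nlinarith
    · have h2 : ε / Real.sqrt t ≤ f t := le_max_right _ _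
      have h3 : (ε / Real.sqrt t) ^ 2 ≤ f t ^ 2 := by
        apply pow_le_pow_left₀ (by positivity) h2
      have h4 : ε ^ 2 / t ≤ f t ^ 2 := by
        have he : ε ^ 2 / t = (ε / Real.sqrt t) ^ 2 := by rw [div_pow, hst]
        rw [he]; exact h3
      have h5 := (div_le_iff₀ ht').mp h4
      linarith [mul_comm (f t ^ 2) t]
  have hkey2 : ∀ t ∈ spectrum ℝ s, |(1 - f t) * t * (1 - f t)| ≤ ε ^ 2 := by
    intro t ht
    have ht' := hspec t ht
    have hst : Real.sqrt t ^ 2 = t := Real.sq_sqrt ht'.le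
    have hstp : 0 < Real.sqrt t := Real.sqrt_pos.mpr ht'
    rcases le_total ε (Real.sqrt t) with h | h
    · have : f t = 1 := max_eq_left (by rw [div_le_one hstp]; exact h)
      simp [this]
      positivity
    · have hft : f t = ε / Real.sqrt t := max_eq_right (by rw [le_div_iff₀ hstp]; simpa using h)
      have hexp : (1 - f t) * t * (1 - f t) = (Real.sqrt t - ε) ^ 2 := by
        rw [hft]; field_simp; nlinarith [hst]
      rw [hexp, abs_of_nonneg (sq_nonneg _)]
      nlinarith [hstp]
  set c : A := cfc f s with hc_def
  have hc_sa : IsSelfAdjoint c := cfc_predicate f s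
  refine ⟨fun i => a i * c, fun i => ?_, ?_, ?_⟩
  · rw [isSelfAdjoint_iff, star_mul, (hsa i).star_eq, hc_sa.star_eq, mul_comm]
  · -- norm estimate
    intro i
    set d : A := 1 - c with hd_def
    have hd_sa : IsSelfAdjoint d := (IsSelfAdjoint.one A).sub hc_sa
    have hx : a i - a i * c = a i * d := by rw [hd_def, mul_sub, mul_one]
    rw [hx]
    have hle : a i ^ 2 ≤ s := by
      rw [hs_def, ← Finset.add_sum_erase _ _ (Finset.mem_univ i)]
      exact le_add_of_nonneg_right (Finset.sum_nonneg fun j _ => hsq j)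
    have hconj : d * (a i ^ 2) * d ≤ d * s * d := by
      have := star_left_conjugate_le_conjugate hle d
      rwa [hd_sa.star_eq] at this
    have hconj_nonneg : (0:A) ≤ d * (a i ^ 2) * d := by
      have := star_left_conjugate_nonneg (hsq i) d
      rwa [hd_sa.star_eq] at this
    have hstar : star (a i * d) * (a i * d) = d * (a i ^ 2) * d := by
      rw [star_mul, hd_sa.star_eq, (hsa i).star_eq]; ring
    have hfc1 : ContinuousOn (fun t => 1 - f t) (spectrum ℝ s) := continuousOn_const.sub hf_cont
    have hfc2 : ContinuousOn (fun t => (1 - f t) * t) (spectrum ℝ s) := hfc1.mul continuousOn_id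
    have hd_cfc : d = cfc (fun t => 1 - f t) s := by
      rw [cfc_sub _ _ s continuousOn_const hf_cont, cfc_const_one ℝ s hs_sa, hd_def, hc_def]
    have hdsd : cfc (fun t => (1 - f t) * t * (1 - f t)) s = d * s * d := by
      rw [cfc_mul (fun t => (1 - f t) * t) (fun t => 1 - f t) s hfc2 hfc1,
        cfc_mul (fun t => 1 - f t) (fun t => t) s hfc1 continuousOn_id,
        cfc_id' ℝ s hs_sa, hd_cfc]
    have hnorm1 : ‖d * s * d‖ ≤ ε ^ 2 := by
      rw [← hdsd]
      exact norm_cfc_le (by positivity) fun t ht => by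
        rw [Real.norm_eq_abs]; exact hkey2 t ht
    have hnorm2 : ‖a i * d‖ * ‖a i * d‖ ≤ ε ^ 2 := by
      calc ‖a i * d‖ * ‖a i * d‖ = ‖star (a i * d) * (a i * d)‖ :=
            (CStarRing.norm_star_mul_self).symm
        _ = ‖d * (a i ^ 2) * d‖ := by rw [hstar]
        _ ≤ ‖d * s * d‖ := CStarAlgebra.norm_le_norm_of_nonneg_of_le hconj_nonneg hconj
        _ ≤ ε ^ 2 := hnorm1
    nlinarith [norm_nonneg (a i * d)]
  · -- the unit
    have hg_cont : ContinuousOn (fun t => t * f t ^ 2) (spectrum ℝ s) :=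
      continuousOn_id.mul (hf_cont.pow 2)
    have hg_ne : ∀ t ∈ spectrum ℝ s, t * f t ^ 2 ≠ 0 := by
      intro t ht
      have h1 := hkey1 t ht
      have h2 : (0:ℝ) < ε ^ 2 := by positivity
      exact ne_of_gt (lt_of_lt_of_le h2 h1)
    refine ⟨cfcUnits (fun t => t * f t ^ 2) s hg_ne hg_cont hs_sa, ?_, ?_⟩
    · rw [val_cfcUnits (fun t => t * f t ^ 2) s hg_ne hg_cont hs_sa]
      have : ∑ i, (a i * c) ^ 2 = s * c ^ 2 := by
        rw [hs_def, Finset.sum_mul]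
        exact Finset.sum_congr rfl fun i _ => by ring
      rw [this, hc_def,
        cfc_mul (fun t => t) (fun t => f t ^ 2) s continuousOn_id (hf_cont.pow 2),
        cfc_pow f 2 s hf_cont, cfc_id' ℝ s hs_sa]
    · rw [val_inv_cfcUnits (fun t => t * f t ^ 2) s hg_ne hg_cont hs_sa]
      refine norm_cfc_le (by positivity) fun t ht => ?_
      have h1 := hkey1 t ht
      have h2 : (0:ℝ) < ε ^ 2 := by positivity
      have hpos : (0:ℝ) < t * f t ^ 2 := lt_of_lt_of_le h2 h1
      rw [Real.norm_eq_abs, abs_of_nonneg (inv_nonneg.mpr hpos.le)]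
      exact inv_anti₀ h2 h1
end

section
/- Let A be a unital C*-algebra and let a ∈ A with ‖a‖ ≤ 1. Then a lies in the norm closure of the set of invertible elements of A if and only if for every ε > 0 there exists a unitary u ∈ A with ‖a − u·|a|‖ < ε. Moreover, if u is a unitary with ‖a − u·|a|‖ < ε, then b := u·(|a| + ε·1) is invertible and ‖a − b‖ < 2ε. -/
/-!
An invertible `b` has the polar decomposition `b = u * |b|` with `u = b * |b|⁻¹` unitary. Since
`x ↦ |x|` is continuous, approximating `a` by an invertible `b` gives `‖a - u * |a|‖` small.
Conversely, `|a| + ε` is strictly positive, hence invertible, so `u * (|a| + ε)` is an invertible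
element within `‖a - u * |a|‖ + ε` of `a`.
-/

open CFC

section
variable {A : Type*} [CStarAlgebra A]

lemma CStarRing.norm_one_le_one : ‖(1 : A)‖ ≤ 1 := by
  rcases subsingleton_or_nontrivial A with _ | _
  · simp [Subsingleton.elim (1 : A) 0]
  · exact norm_one.le

lemma norm_sub_mul_add_smul_one_le {a u : A} (hu : u ∈ unitary A) (m : A) {ε : ℝ} (hε : 0 ≤ ε) :
    ‖a - u * (m + ε • (1 : A))‖ ≤ ‖a - u * m‖ + ε := by
  calc ‖a - u * (m + ε • (1 : A))‖ = ‖(a - u * m) - u * ε • (1 : A)‖ := by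
        rw [mul_add, sub_add_eq_sub_sub]
    _ ≤ ‖a - u * m‖ + ‖u * ε • (1 : A)‖ := norm_sub_le _ _
    _ = ‖a - u * m‖ + ‖ε • (1 : A)‖ := by rw [CStarRing.norm_mem_unitary_mul _ hu]
    _ ≤ ‖a - u * m‖ + ε := by
        grw [norm_smul, Real.norm_of_nonneg hε, CStarRing.norm_one_le_one, mul_one]

variable [PartialOrder A] [StarOrderedRing A]

lemma CFC.abs_eq_cfc_sqrt_star_mul_self (a : A) : abs a = cfc Real.sqrt (star a * a) := by
  rw [abs, sqrt_eq_real_sqrt _ (star_mul_self_nonneg a), cfcₙ_eq_cfc]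

lemma isUnit_add_smul_one_of_nonneg {m : A} (hm : 0 ≤ m) {ε : ℝ} (hε : 0 < ε) :
    IsUnit (m + ε • (1 : A)) :=
  (isStrictlyPositive_add (.inr ⟨hm, IsStrictlyPositive.smul hε isStrictlyPositive_one⟩)).isUnit

lemma IsUnit.cfcAbs {b : A} (hb : IsUnit b) : IsUnit (abs b) :=
  (isUnit_sqrt_iff _ (star_mul_self_nonneg b)).mpr (hb.star.mul hb)

lemma IsUnit.exists_mem_unitary_mul_cfcAbs_eq {b : A} (hb : IsUnit b) :
    ∃ u ∈ unitary A, u * abs b = b := by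
  obtain ⟨r, hr⟩ := hb.cfcAbs
  refine ⟨b * ↑r⁻¹, (hb.mul r⁻¹.isUnit).mem_unitary_iff_star_mul_self.mpr ?_, by
    rw [mul_assoc, ← hr, Units.inv_mul, mul_one]⟩
  have hr_star : star (↑r⁻¹ : A) * abs b = 1 := by
    rw [← (abs_nonneg b).isSelfAdjoint.star_eq, ← star_mul, ← hr, Units.mul_inv, star_one]
  calc star (b * ↑r⁻¹) * (b * ↑r⁻¹) = star (↑r⁻¹ : A) * (abs b * abs b) * ↑r⁻¹ := by
        rw [abs_mul_abs, star_mul]; noncomm_ring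
    _ = 1 := by rw [← mul_assoc, hr_star, one_mul, ← hr, Units.mul_inv]

lemma exists_mem_unitary_norm_sub_mul_cfcAbs_lt {a : A} (ha : a ∈ closure {x : A | IsUnit x})
    {ε : ℝ} (hε : 0 < ε) : ∃ u ∈ unitary A, ‖a - u * abs a‖ < ε := by
  have hopen : IsOpen {b : A | ‖a - b‖ + ‖abs b - abs a‖ < ε} :=
    isOpen_lt ((continuous_const.sub continuous_id).norm.add
      (CFC.continuous_abs.sub continuous_const).norm) continuous_const
  obtain ⟨b, hb_near, hb_unit⟩ := mem_closure_iff.mp ha _ hopen (by simpa using hε)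
  obtain ⟨u, hu, hub⟩ := hb_unit.exists_mem_unitary_mul_cfcAbs_eq
  refine ⟨u, hu, lt_of_le_of_lt ?_ hb_near⟩
  calc ‖a - u * abs a‖ = ‖(a - b) + u * (abs b - abs a)‖ := by
        rw [mul_sub, hub]; abel_nf
    _ ≤ ‖a - b‖ + ‖u * (abs b - abs a)‖ := norm_add_le _ _
    _ = ‖a - b‖ + ‖abs b - abs a‖ := by rw [CStarRing.norm_mem_unitary_mul _ hu]

end

theorem stmt_3_general {A : Type*} [CStarAlgebra A] (a : A) :
    (a ∈ closure {x : A | IsUnit x} ↔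
      ∀ ε > (0 : ℝ), ∃ u ∈ unitary A, ‖a - u * cfc Real.sqrt (star a * a)‖ < ε) ∧
    (∀ ε > (0 : ℝ), ∀ u ∈ unitary A, ‖a - u * cfc Real.sqrt (star a * a)‖ < ε →
      IsUnit (u * (cfc Real.sqrt (star a * a) + ε • (1 : A))) ∧
      ‖a - u * (cfc Real.sqrt (star a * a) + ε • (1 : A))‖ < 2 * ε) := by
  let : PartialOrder A := CStarAlgebra.spectralOrder A
  let : StarOrderedRing A := CStarAlgebra.spectralOrderedRing A
  simp only [← abs_eq_cfc_sqrt_star_mul_self]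
  have invertible_approx : ∀ ε > (0 : ℝ), ∀ u ∈ unitary A, ‖a - u * abs a‖ < ε →
      IsUnit (u * (abs a + ε • (1 : A))) ∧ ‖a - u * (abs a + ε • (1 : A))‖ < 2 * ε :=
    fun ε hε u hu hlt => ⟨(Unitary.isUnit_coe (U := ⟨u, hu⟩)).mul
      (isUnit_add_smul_one_of_nonneg (abs_nonneg a) hε),
      by linarith [norm_sub_mul_add_smul_one_le (a := a) hu (abs a) hε.le]⟩
  refine ⟨⟨fun ha ε hε => exists_mem_unitary_norm_sub_mul_cfcAbs_lt ha hε, fun h => ?_⟩,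
    invertible_approx⟩
  refine Metric.mem_closure_iff.mpr fun ε hε => ?_
  obtain ⟨u, hu, hlt⟩ := h (ε / 2) (half_pos hε)
  obtain ⟨hunit, hnorm⟩ := invertible_approx (ε / 2) (half_pos hε) u hu hlt
  exact ⟨_, hunit, by rw [dist_eq_norm]; linarith⟩

/-- An element of the unit ball lies in the closure of the invertibles iff it is approximately
of the form `u * |a|` with `u` unitary; moreover `u * (|a| + ε)` is then an invertible
`2ε`-approximation of `a`. Here `|a| = (a* a)^(1/2)` via the continuous functional calculus. -/
theorem stmt_3 {A : Type*} [CStarAlgebra A] (a : A) (ha : ‖a‖ ≤ 1) :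
    (a ∈ closure {x : A | IsUnit x} ↔
      ∀ ε > (0 : ℝ), ∃ u ∈ unitary A, ‖a - u * cfc Real.sqrt (star a * a)‖ < ε) ∧
    (∀ ε > (0 : ℝ), ∀ u ∈ unitary A, ‖a - u * cfc Real.sqrt (star a * a)‖ < ε →
      IsUnit (u * (cfc Real.sqrt (star a * a) + ε • (1 : A))) ∧
      ‖a - u * (cfc Real.sqrt (star a * a) + ε • (1 : A))‖ < 2 * ε) :=
  stmt_3_general a
end

section
/- Let A be a unital C*-algebra. For every invertible element a ∈ A and every ε > 0 there exists an invertible element b ∈ A such that ‖a − b‖ ≤ ε and ‖b⁻¹‖ ≤ ε⁻¹. -/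
/-- Every invertible element of a unital C*-algebra can be `ε`-approximated by an invertible
element whose inverse has norm at most `ε⁻¹`. -/
theorem stmt_4 {A : Type*} [CStarAlgebra A] (a : A) (ha : IsUnit a) :
    ∀ ε > (0 : ℝ), ∃ b : Aˣ, ‖a - (b : A)‖ ≤ ε ∧ ‖((b⁻¹ : Aˣ) : A)‖ ≤ ε⁻¹ := by
  intro ε hε
  set h : A := star a * a with hh_def
  have hh_sa : IsSelfAdjoint h := IsSelfAdjoint.star_mul_self a
  have hspec : ∀ x ∈ spectrum ℝ h, 0 ≤ x := spectrum_star_mul_self_nonneg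
  have hh_unit : IsUnit h := ha.star.mul ha
  have h0 : (0 : ℝ) ∉ spectrum ℝ h := spectrum.zero_notMem ℝ hh_unit
  have hspos : ∀ x ∈ spectrum ℝ h, 0 < Real.sqrt x := fun x hx =>
    Real.sqrt_pos.2 ((hspec x hx).lt_of_ne (fun he => h0 (he ▸ hx)))
  -- continuity facts
  have csqrt : ContinuousOn Real.sqrt (spectrum ℝ h) := Real.continuous_sqrt.continuousOn
  have cinv : ContinuousOn (fun t : ℝ => (Real.sqrt t)⁻¹) (spectrum ℝ h) :=
    csqrt.inv₀ fun x hx => (hspos x hx).ne'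
  have cmax : ContinuousOn (fun t : ℝ => max (Real.sqrt t) ε) (spectrum ℝ h) :=
    (Real.continuous_sqrt.max continuous_const).continuousOn
  have cmaxinv : ContinuousOn (fun t : ℝ => (max (Real.sqrt t) ε)⁻¹) (spectrum ℝ h) :=
    cmax.inv₀ fun x _ => (lt_max_of_lt_right hε).ne'
  set p : A := cfc Real.sqrt h with hp_def
  set pinv : A := cfc (fun t : ℝ => (Real.sqrt t)⁻¹) h with hpinv_def
  set q : A := cfc (fun t : ℝ => max (Real.sqrt t) ε) h with hq_def
  set qinv : A := cfc (fun t : ℝ => (max (Real.sqrt t) ε)⁻¹) h with hqinv_def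
  have hppinv : p * pinv = 1 := by
    rw [hp_def, hpinv_def, ← cfc_mul _ _ h csqrt cinv,
      cfc_congr (g := fun _ : ℝ => (1 : ℝ)) fun x hx => mul_inv_cancel₀ (hspos x hx).ne']
    exact cfc_const_one ℝ h
  have hpinvp : pinv * p = 1 := by
    rw [hp_def, hpinv_def, ← cfc_mul _ _ h cinv csqrt,
      cfc_congr (g := fun _ : ℝ => (1 : ℝ)) fun x hx => inv_mul_cancel₀ (hspos x hx).ne']
    exact cfc_const_one ℝ h
  have hpp : p * p = h := by
    rw [hp_def, ← cfc_mul _ _ h csqrt csqrt,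
      cfc_congr (g := fun x : ℝ => x) fun x hx => Real.mul_self_sqrt (hspec x hx)]
    exact cfc_id ℝ h
  have hqqinv : q * qinv = 1 := by
    rw [hq_def, hqinv_def, ← cfc_mul _ _ h cmax cmaxinv,
      cfc_congr (g := fun _ : ℝ => (1 : ℝ)) fun x _ => mul_inv_cancel₀ (lt_max_of_lt_right hε).ne']
    exact cfc_const_one ℝ h
  have hqinvq : qinv * q = 1 := by
    rw [hq_def, hqinv_def, ← cfc_mul _ _ h cmaxinv cmax,
      cfc_congr (g := fun _ : ℝ => (1 : ℝ)) fun x _ => inv_mul_cancel₀ (lt_max_of_lt_right hε).ne']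
    exact cfc_const_one ℝ h
  have hpinv_sa : IsSelfAdjoint pinv := cfc_predicate _ h
  -- hinv = h⁻¹
  have hpinv2 : pinv * pinv = cfc (fun t : ℝ => t⁻¹) h := by
    rw [hpinv_def, ← cfc_mul _ _ h cinv cinv]
    exact cfc_congr fun x hx => by
      rw [← mul_inv, Real.mul_self_sqrt (hspec x hx)]
  have hinvh : cfc (fun t : ℝ => t⁻¹) h * h = 1 := by
    have cid : ContinuousOn (fun t : ℝ => t) (spectrum ℝ h) := continuousOn_id
    have cin : ContinuousOn (fun t : ℝ => t⁻¹) (spectrum ℝ h) :=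
      cid.inv₀ fun x hx => fun he => h0 (he ▸ hx)
    have key : cfc (fun t : ℝ => t⁻¹) h * cfc (fun t : ℝ => t) h = 1 := by
      rw [← cfc_mul _ _ h cin cid,
        cfc_congr (g := fun _ : ℝ => (1 : ℝ)) fun x hx =>
          inv_mul_cancel₀ (fun he => h0 (he ▸ hx))]
      exact cfc_const_one ℝ h
    rwa [cfc_id' ℝ h] at key
  -- u := a * pinv is unitary
  set u : A := a * pinv with hu_def
  have hu1 : star u * u = 1 := by
    rw [hu_def, star_mul, hpinv_sa.star_eq, mul_assoc, ← mul_assoc (star a) a pinv, ← hh_def,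
      ← hpp, mul_assoc p p pinv, hppinv, mul_one, hpinvp]
  have hu2 : u * star u = 1 := by
    rw [hu_def, star_mul, hpinv_sa.star_eq, mul_assoc, ← mul_assoc pinv pinv (star a), hpinv2]
    have hxa : cfc (fun t : ℝ => t⁻¹) h * star a * a = 1 := by
      rw [mul_assoc, ← hh_def, hinvh]
    have hx : (↑ha.unit⁻¹ : A) = cfc (fun t : ℝ => t⁻¹) h * star a :=
      Units.inv_eq_of_mul_eq_one_left (by rw [ha.unit_spec]; exact hxa)
    rw [← hx]; exact ha.mul_val_inv
  have hu_mem : u ∈ unitary A := Unitary.mem_iff.2 ⟨hu1, hu2⟩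
  -- a = u * p
  have haup : u * p = a := by rw [hu_def, mul_assoc, hpinvp, mul_one]
  -- the unit b
  refine ⟨⟨u, star u, hu2, hu1⟩ * ⟨q, qinv, hqqinv, hqinvq⟩, ?_, ?_⟩
  · have : a - u * q = u * (p - q) := by rw [mul_sub, haup]
    rw [Units.val_mul, show ((⟨u, star u, hu2, hu1⟩ : Aˣ) : A) = u from rfl,
      show ((⟨q, qinv, hqqinv, hqinvq⟩ : Aˣ) : A) = q from rfl, this,
      CStarRing.norm_mem_unitary_mul _ hu_mem, hp_def, hq_def, ← cfc_sub _ _ h csqrt cmax]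
    refine norm_cfc_le hε.le fun x hx => ?_
    have h1 : Real.sqrt x ≤ max (Real.sqrt x) ε := le_max_left _ _
    have h2 : max (Real.sqrt x) ε ≤ Real.sqrt x + ε :=
      max_le (le_add_of_nonneg_right hε.le) (le_add_of_nonneg_left (Real.sqrt_nonneg x))
    rw [Real.norm_eq_abs, abs_sub_comm, abs_of_nonneg (by linarith)]
    linarith
  · rw [mul_inv_rev, Units.val_mul,
      show (((⟨u, star u, hu2, hu1⟩ : Aˣ)⁻¹ : Aˣ) : A) = star u from rfl,
      show (((⟨q, qinv, hqqinv, hqinvq⟩ : Aˣ)⁻¹ : Aˣ) : A) = qinv from rfl,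
      CStarRing.norm_mul_mem_unitary _ (Unitary.star_mem hu_mem), hqinv_def]
    refine norm_cfc_le (inv_nonneg.2 hε.le) fun x hx => ?_
    rw [Real.norm_eq_abs, abs_of_nonneg (inv_nonneg.2 (le_max_of_le_right hε.le))]
    exact inv_anti₀ hε (le_max_right _ _)
end

section
/- Let A be a unital C*-algebra, let b ∈ A be a self-adjoint invertible element with ‖b‖ ≤ 1, and let 0 < ε ≤ 1. Then there exists a self-adjoint invertible element c ∈ A with ‖c‖ ≤ 1, ‖b − c‖ ≤ ε, and ‖c⁻¹‖ ≤ ε⁻¹. -/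
private noncomputable def stmtF (ε : ℝ) : ℝ → ℝ := fun t => t * max 1 (ε / |t|)

private lemma stmtF_props {ε t : ℝ} (hε0 : 0 < ε) (ht : t ≠ 0) :
    |stmtF ε t| = max |t| ε ∧ |t - stmtF ε t| ≤ ε := by
  have habs : (0:ℝ) < |t| := abs_pos.mpr ht
  unfold stmtF
  rcases le_or_gt (ε / |t|) 1 with h | h
  · rw [max_eq_left h, mul_one]
    have : ε ≤ |t| := (div_le_one habs).mp h
    constructor
    · rw [max_eq_left this]
    · simpa using hε0.le
  · rw [max_eq_right h.le]
    have hεt : |t| ≤ ε := by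
      have := (one_lt_div habs).mp h
      linarith
    constructor
    · rw [abs_mul, abs_div, abs_abs, abs_of_pos hε0, mul_div_cancel₀ _ habs.ne',
        max_eq_right hεt]
    · have h1 : t - t * (ε / |t|) = t * (1 - ε / |t|) := by ring
      rw [h1, abs_mul]
      have h2 : abs (1 - ε / |t|) = ε / |t| - 1 := by
        rw [abs_of_nonpos (by linarith)]; ring
      rw [h2]
      have h3 : |t| * (ε / |t| - 1) = ε - |t| := by
        field_simp
      rw [h3]; linarith

/-- A self-adjoint invertible contraction can be `ε`-approximated by a self-adjoint invertible
contraction whose inverse has norm at most `ε⁻¹`. -/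
theorem stmt_5 {A : Type*} [CStarAlgebra A] (b : A) (hsa : IsSelfAdjoint b)
    (hb : IsUnit b) (hbn : ‖b‖ ≤ 1) (ε : ℝ) (hε0 : 0 < ε) (hε1 : ε ≤ 1) :
    ∃ c : Aˣ, IsSelfAdjoint (c : A) ∧ ‖(c : A)‖ ≤ 1 ∧ ‖b - (c : A)‖ ≤ ε ∧
      ‖((c⁻¹ : Aˣ) : A)‖ ≤ ε⁻¹ := by
  rcases subsingleton_or_nontrivial A with hA | hA
  · have h1 : ∀ x : A, x = 0 := fun x => Subsingleton.elim x 0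
    have hεinv : (0:ℝ) ≤ ε⁻¹ := by positivity
    refine ⟨1, ?_, ?_, ?_, ?_⟩ <;> simp [h1, hε0.le, hεinv]
  have h0 : (0:ℝ) ∉ spectrum ℝ b := spectrum.zero_notMem_iff ℝ |>.mpr hb
  have hne : ∀ t ∈ spectrum ℝ b, t ≠ 0 := fun t ht h => h0 (h ▸ ht)
  have hcont : ContinuousOn (stmtF ε) (spectrum ℝ b) := by
    have hd : ContinuousOn (fun t : ℝ => ε / |t|) (spectrum ℝ b) :=
      ContinuousOn.div continuousOn_const (Continuous.continuousOn continuous_abs)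
        (fun t ht => abs_ne_zero.mpr (hne t ht))
    exact continuousOn_id.mul (continuousOn_const.sup hd)
  have hfabs : ∀ t ∈ spectrum ℝ b, |stmtF ε t| = max |t| ε :=
    fun t ht => (stmtF_props hε0 (hne t ht)).1
  have hfne : ∀ t ∈ spectrum ℝ b, stmtF ε t ≠ 0 := by
    intro t ht h
    have h2 := hfabs t ht
    rw [h, abs_zero] at h2
    have : ε ≤ 0 := h2 ▸ le_max_right |t| ε
    linarith
  refine ⟨cfcUnits (stmtF ε) b hfne hcont hsa, ?_, ?_, ?_, ?_⟩
  · rw [val_cfcUnits (stmtF ε) b hfne hcont hsa]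
    exact cfc_predicate _ b
  · rw [val_cfcUnits (stmtF ε) b hfne hcont hsa]
    apply norm_cfc_le zero_le_one
    intro t ht
    rw [Real.norm_eq_abs, hfabs t ht]
    exact max_le (by simpa using spectrum.norm_le_norm_of_mem ht |>.trans hbn) hε1
  · rw [val_cfcUnits (stmtF ε) b hfne hcont hsa]
    nth_rewrite 1 [← cfc_id ℝ b]
    rw [← cfc_sub ..]
    apply norm_cfc_le hε0.le
    intro t ht
    rw [Real.norm_eq_abs]
    exact (stmtF_props hε0 (hne t ht)).2
  · rw [val_inv_cfcUnits (stmtF ε) b hfne hcont hsa]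
    apply norm_cfc_le (by positivity)
    intro t ht
    rw [Real.norm_eq_abs, abs_inv, hfabs t ht]
    exact inv_anti₀ hε0 (le_max_right _ _)
end

section
/- Let A be a nontrivial unital C*-algebra (so 1 ≠ 0) and let a ∈ A. The following are equivalent: (1) a has a left inverse in A, i.e., there exists b ∈ A with b·a = 1; (2) a*a is invertible in A; (3) ‖ ‖a‖·1 − |a| ‖ < ‖a‖. (In particular, the quantity ‖a‖ − ‖ ‖a‖·1 − |a| ‖, which is always nonnegative, vanishes exactly when a is not left-invertible.) -/
/-- Characterization of left-invertibility in a nontrivial unital C*-algebra, where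
`|a| = (a* a)^(1/2)` via the continuous functional calculus; moreover the quantity
`‖ ‖a‖·1 - |a| ‖` is always at most `‖a‖`. -/
theorem stmt_6 {A : Type*} [CStarAlgebra A] [Nontrivial A] (a : A) :
    [ (∃ b : A, b * a = 1),
      IsUnit (star a * a),
      ‖‖a‖ • (1 : A) - cfc Real.sqrt (star a * a)‖ < ‖a‖ ].TFAE ∧
    ‖‖a‖ • (1 : A) - cfc Real.sqrt (star a * a)‖ ≤ ‖a‖ := by
  set x := star a * a with hxdef
  have hx : IsSelfAdjoint x := IsSelfAdjoint.star_mul_self a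
  have hspec : ∀ t ∈ spectrum ℝ x, 0 ≤ t ∧ t ≤ ‖a‖ * ‖a‖ := by
    intro t ht
    have h0 : 0 ≤ t := spectrum_star_mul_self_nonneg t ht
    have h1 : ‖t‖ ≤ ‖x‖ := spectrum.norm_le_norm_of_mem ht
    rw [Real.norm_of_nonneg h0] at h1
    exact ⟨h0, h1.trans_eq (CStarRing.norm_star_mul_self)⟩
  have key : ‖a‖ • (1 : A) - cfc Real.sqrt x = cfc (fun t : ℝ => ‖a‖ - Real.sqrt t) x := by
    rw [cfc_sub (fun _ : ℝ => ‖a‖) Real.sqrt x, cfc_const _ _, Algebra.algebraMap_eq_smul_one]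
  have sqrt_le : ∀ t ∈ spectrum ℝ x, Real.sqrt t ≤ ‖a‖ := by
    intro t ht
    obtain ⟨h0, h1⟩ := hspec t ht
    exact (Real.sqrt_le_sqrt h1).trans_eq (Real.sqrt_mul_self (norm_nonneg a))
  have hle : ‖‖a‖ • (1 : A) - cfc Real.sqrt x‖ ≤ ‖a‖ := by
    rw [key]
    refine norm_cfc_le (norm_nonneg a) fun t ht => ?_
    rw [Real.norm_eq_abs, abs_le]
    constructor
    · linarith [sqrt_le t ht, norm_nonneg a]
    · linarith [Real.sqrt_nonneg t]
  refine ⟨?_, hle⟩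
  tfae_have 1 → 2 := by
    rintro ⟨b, hb⟩
    by_contra hu
    have h0 : (0 : ℝ) ∈ spectrum ℝ x := spectrum.zero_mem_iff ℝ |>.mpr hu
    have hb0 : b ≠ 0 := by
      rintro rfl; rw [zero_mul] at hb; exact one_ne_zero hb.symm
    have hbpos : 0 < ‖b‖ := norm_pos_iff.mpr hb0
    set ε : ℝ := 1 / (2 * ‖b‖ ^ 2) with hε
    have hεpos : 0 < ε := by positivity
    set f : ℝ → ℝ := fun t => max 0 (1 - t / ε) with hf
    have hfc : Continuous f := by fun_prop
    set z : A := cfc f x with hz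
    have hz_sa : IsSelfAdjoint z := cfc_predicate f x
    have hz1 : (1 : ℝ) ≤ ‖z‖ := by
      have := norm_apply_le_norm_cfc f x h0 hfc.continuousOn hx
      simpa [hf, hεpos.le] using this
    -- ‖a * z‖ ^ 2 = ‖z * x * z‖ ≤ ε
    have hzxz : star (a * z) * (a * z) = cfc (fun t => f t * t * f t) x := by
      rw [cfc_mul _ _ x (by fun_prop) (by fun_prop), cfc_mul _ _ x (by fun_prop) (by fun_prop),
        cfc_id' ℝ x]
      rw [star_mul, hz_sa.star_eq]
      rw [hxdef]
      noncomm_ring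
    have haz : ‖a * z‖ ^ 2 ≤ ε := by
      rw [sq, ← CStarRing.norm_star_mul_self, hzxz]
      refine norm_cfc_le hεpos.le fun t ht => ?_
      obtain ⟨ht0, _⟩ := hspec t ht
      rcases le_or_gt t ε with h | h
      · have hf1 : f t ≤ 1 := by simp [hf]; positivity
        have hf0 : 0 ≤ f t := le_max_left _ _
        rw [Real.norm_eq_abs, abs_of_nonneg (by positivity)]
        calc f t * t * f t ≤ 1 * t * 1 := by
              apply mul_le_mul (mul_le_mul hf1 le_rfl ht0 one_pos.le) hf1 hf0 (by positivity)
          _ = t := by ring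
          _ ≤ ε := h
      · have : f t = 0 := by
          simp only [hf, max_eq_left_iff]
          rw [sub_nonpos, le_div_iff₀ hεpos, one_mul]
          exact h.le
        simp [this, hεpos.le]
    have h1 : (1 : ℝ) ≤ ‖b‖ * ‖a * z‖ := by
      calc (1 : ℝ) ≤ ‖z‖ := hz1
        _ = ‖b * a * z‖ := by rw [hb, one_mul]
        _ = ‖b * (a * z)‖ := by rw [mul_assoc]
        _ ≤ ‖b‖ * ‖a * z‖ := norm_mul_le _ _
    have h2 : (1 : ℝ) ≤ ‖b‖ ^ 2 * ‖a * z‖ ^ 2 := by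
      have := mul_le_mul h1 h1 zero_le_one (by positivity)
      calc (1:ℝ) = 1 * 1 := by ring
        _ ≤ (‖b‖ * ‖a * z‖) * (‖b‖ * ‖a * z‖) := this
        _ = ‖b‖ ^ 2 * ‖a * z‖ ^ 2 := by ring
    have h3 : ‖b‖ ^ 2 * ‖a * z‖ ^ 2 ≤ ‖b‖ ^ 2 * ε := by
      exact mul_le_mul_of_nonneg_left haz (by positivity)
    rw [hε] at h3
    have : ‖b‖ ^ 2 * (1 / (2 * ‖b‖ ^ 2)) = 1 / 2 := by field_simp
    linarith
  tfae_have 2 → 1 := by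
    rintro ⟨u, hu⟩
    exact ⟨↑u⁻¹ * star a, by rw [mul_assoc, ← hxdef, ← hu, Units.inv_mul]⟩
  tfae_have 2 → 3 := by
    intro hu
    have ha0 : a ≠ 0 := by
      rintro rfl
      simp only [star_zero, zero_mul, hxdef] at hu
      exact (by simp at hu : False)
    have hapos : 0 < ‖a‖ := norm_pos_iff.mpr ha0
    rw [key]
    refine norm_cfc_lt hapos fun t ht => ?_
    obtain ⟨ht0, _⟩ := hspec t ht
    have htne : t ≠ 0 := by
      rintro rfl
      exact spectrum.not_isUnit_of_zero_mem _ ht hu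
    have htpos : 0 < t := lt_of_le_of_ne ht0 (Ne.symm htne)
    rw [Real.norm_eq_abs, abs_lt]
    constructor
    · linarith [sqrt_le t ht]
    · have := Real.sqrt_pos.mpr htpos
      linarith
  tfae_have 3 → 2 := by
    intro h3
    by_contra hu
    have h0 : (0 : ℝ) ∈ spectrum ℝ x := spectrum.zero_mem_iff ℝ |>.mpr hu
    have := norm_apply_le_norm_cfc (fun t : ℝ => ‖a‖ - Real.sqrt t) x h0
      (by fun_prop) hx
    rw [← key] at this
    simp only [Real.sqrt_zero, sub_zero, Real.norm_eq_abs, abs_of_nonneg (norm_nonneg a)] at this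
    linarith
  tfae_finish
end

section
/- Let H be a complex Hilbert space and let A be a norm-closed *-subalgebra of the C*-algebra B(H) of bounded operators on H. Suppose a ∈ A is self-adjoint, v ∈ B(H), and v·a ∈ A. Then for every continuous function f : ℝ → ℝ with f(0) = 0, the operator v·f(a) belongs to A, where f(a) is given by the continuous functional calculus applied to the self-adjoint operator a. -/
/-!
The set of `x ∈ S` with `v * x ∈ S` is a closed real subalgebra (not a *-subalgebra): it is closed
under products because `v * (x * y) = (v * x) * y` with `y ∈ S`. It contains `a`, hence the closed
subalgebra generated by `a`. Since `a` is self-adjoint, that is the closed *-subalgebra generated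
by `a`, and as `f 0 = 0` it contains `f(a)` (the non-unital functional calculus).
-/

namespace NonUnitalSubalgebra

variable {R A S : Type*} [CommSemiring R] [NonUnitalSemiring A] [Module R A]
  [SMulCommClass R A A] [SetLike S A] [NonUnitalSubsemiringClass S A]
  [SMulMemClass S R A]

variable (R) in
def interPreimageMulLeft (s : S) (v : A) : NonUnitalSubalgebra R A where
  carrier := {x | x ∈ s ∧ v * x ∈ s}
  add_mem' hx hy := ⟨add_mem hx.1 hy.1, by simpa only [mul_add] using add_mem hx.2 hy.2⟩
  zero_mem' := ⟨zero_mem s, by simpa only [mul_zero] using zero_mem s⟩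
  mul_mem' hx hy := ⟨mul_mem hx.1 hy.1, by simpa only [mul_assoc] using mul_mem hx.2 hy.1⟩
  smul_mem' r _ hx := ⟨SMulMemClass.smul_mem r hx.1,
    by simpa only [mul_smul_comm] using SMulMemClass.smul_mem r hx.2⟩

theorem isClosed_interPreimageMulLeft [TopologicalSpace A] [IsSemitopologicalSemiring A]
    {s : S} (hs : IsClosed (s : Set A)) (v : A) :
    IsClosed (interPreimageMulLeft R s v : Set A) :=
  hs.inter (hs.preimage (continuous_const_mul v))

end NonUnitalSubalgebra

theorem IsSelfAdjoint.elemental_le {R A : Type*} [CommSemiring R] [StarRing R]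
    [NonUnitalSemiring A] [StarRing A] [Module R A] [IsScalarTower R A A] [SMulCommClass R A A]
    [StarModule R A] [TopologicalSpace A] [IsSemitopologicalSemiring A] [ContinuousConstSMul R A]
    [ContinuousStar A] {a : A} (ha : IsSelfAdjoint a) {t : NonUnitalSubalgebra R A}
    (ht : IsClosed (t : Set A)) (hat : a ∈ t) :
    (NonUnitalStarAlgebra.elemental R a : Set A) ⊆ t := by
  refine closure_minimal ?_ ht
  have hadjoin : (NonUnitalStarAlgebra.adjoin R {a}).toNonUnitalSubalgebra =
      NonUnitalAlgebra.adjoin R {a} := by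
    rw [NonUnitalStarAlgebra.adjoin_toNonUnitalSubalgebra, Set.star_singleton, ha.star_eq,
      Set.union_self]
  change ((NonUnitalStarAlgebra.adjoin R {a}).toNonUnitalSubalgebra : Set A) ⊆ t
  rw [hadjoin]
  exact NonUnitalAlgebra.adjoin_le (Set.singleton_subset_iff.mpr hat)

/-- If `A` is a norm-closed *-subalgebra of `B(H)`, `a ∈ A` is self-adjoint, `v ∈ B(H)` and
`v·a ∈ A`, then `v·f(a) ∈ A` for every continuous `f : ℝ → ℝ` with `f 0 = 0`, where `f(a)` is
given by the continuous functional calculus. -/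
theorem stmt_7 {H : Type*} [NormedAddCommGroup H] [InnerProductSpace ℂ H] [CompleteSpace H]
    (S : NonUnitalStarSubalgebra ℂ (H →L[ℂ] H)) (hS : IsClosed (S : Set (H →L[ℂ] H)))
    (a : H →L[ℂ] H) (haS : a ∈ S) (hsa : IsSelfAdjoint a)
    (v : H →L[ℂ] H) (hva : v * a ∈ S)
    (f : ℝ → ℝ) (hf : Continuous f) (hf0 : f 0 = 0) :
    v * cfc f a ∈ S := by
  have : SMulMemClass (NonUnitalStarSubalgebra ℂ (H →L[ℂ] H)) ℝ (H →L[ℂ] H) :=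
    SMulMemClass.ofIsScalarTower (NonUnitalStarSubalgebra ℂ (H →L[ℂ] H)) ℝ ℂ (H →L[ℂ] H)
  have hT := NonUnitalSubalgebra.isClosed_interPreimageMulLeft (R := ℝ) hS v
  rw [← cfcₙ_eq_cfc hf.continuousOn hf0]
  exact (hsa.elemental_le hT ⟨haS, hva⟩ (cfcₙ_mem_elemental f a)).2
end

section
/- Let A be a C*-algebra, let a, b ∈ A be positive contractions, and let δ > 0. (i) If there exists s ∈ A with a = s*·(b − δ)₊·s, then there exists x ∈ A with ‖x‖ ≤ δ^{−1/2} and a = x*·b·x. (ii) If for every η > 0 there exists s ∈ A with ‖a − s*·(b − δ)₊·s‖ < η, then for every ε > 0 there exists x ∈ A with ‖x‖ ≤ δ^{−1/2} and ‖x*·b·x − a‖ < ε. -/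
open Unitization in
lemma rordam_key {A : Type*} [NonUnitalCStarAlgebra A] (b : A) (hbsa : IsSelfAdjoint b)
    (δ : ℝ) (hδ : 0 < δ) (s : A) :
    ∃ x : A, star x * b * x = star s * cfcₙ (fun t : ℝ => max (t - δ) 0) b * s ∧
      ‖x‖ ^ 2 ≤ δ⁻¹ * ‖star s * cfcₙ (fun t : ℝ => max (t - δ) 0) b * s‖ := by
  letI := CStarAlgebra.spectralOrder (Unitization ℂ A)
  haveI := CStarAlgebra.spectralOrderedRing (Unitization ℂ A)
  set h : ℝ → ℝ := fun t => max (t - δ) 0 with hh_def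
  set g : ℝ → ℝ := fun t => Real.sqrt (max (t - δ) 0 / max t δ) with hg_def
  have hd : ∀ t : ℝ, 0 < max t δ := fun t => lt_of_lt_of_le hδ (le_max_right t δ)
  have hgc : Continuous g := by
    apply Real.continuous_sqrt.comp
    exact ((continuous_id.sub continuous_const).max continuous_const).div
      (continuous_id.max continuous_const) (fun t => (hd t).ne')
  have hg0 : g 0 = 0 := by
    simp [hg_def, max_eq_right (show (0:ℝ) - δ ≤ 0 by linarith), hδ.le]
  have hh0 : h 0 = 0 := by
    simp [hh_def, max_eq_right (show (0:ℝ) - δ ≤ 0 by linarith)]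
  have hhc : Continuous h := ((continuous_id.sub continuous_const).max continuous_const)
  have hhnn : ∀ t : ℝ, 0 ≤ h t := fun t => le_max_right _ _
  have hmul : ∀ t : ℝ, g t * g t = h t / max t δ := fun t =>
    Real.mul_self_sqrt (div_nonneg (le_max_right _ _) (hd t).le)
  have hgtg : ∀ t : ℝ, g t * (t * g t) = h t := by
    intro t
    rcases le_or_gt t δ with ht | ht
    · have h1 : h t = 0 := max_eq_right (by linarith)
      have h2 : g t = 0 := by
        rw [hg_def]; simp only
        rw [max_eq_right (show t - δ ≤ 0 by linarith), zero_div, Real.sqrt_zero]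
      simp [h1, h2]
    · have h1 : max t δ = t := max_eq_left ht.le
      have e : g t * (t * g t) = (g t * g t) * t := by ring
      rw [e, hmul, h1, div_mul_cancel₀]
      exact (lt_trans hδ ht).ne'
  -- main algebraic identity
  have key1 : cfcₙ g b * b * cfcₙ g b = cfcₙ h b := by
    have e1 : cfcₙ (fun t : ℝ => t * g t) b = b * cfcₙ g b := by
      rw [cfcₙ_mul (fun t : ℝ => t) g b (by fun_prop) rfl hgc.continuousOn hg0,
        cfcₙ_id' ℝ b hbsa]
    have e2 : cfcₙ (fun t : ℝ => g t * (t * g t)) b = cfcₙ g b * (b * cfcₙ g b) := by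
      rw [cfcₙ_mul g (fun t : ℝ => t * g t) b hgc.continuousOn hg0
        ((continuous_id.mul hgc).continuousOn) (by simp [hg0]), e1]
    rw [mul_assoc, ← e2]
    exact cfcₙ_congr (fun t _ => hgtg t)
  have hsa_g : star (cfcₙ g b) = cfcₙ g b :=
    (cfcₙ_predicate g b : IsSelfAdjoint _).star_eq
  refine ⟨cfcₙ g b * s, ?_, ?_⟩
  · rw [star_mul, hsa_g]
    calc star s * cfcₙ g b * b * (cfcₙ g b * s)
        = star s * (cfcₙ g b * b * cfcₙ g b) * s := by noncomm_ring
      _ = star s * cfcₙ h b * s := by rw [key1]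
  · -- norm bound
    have hsq : cfcₙ g b * cfcₙ g b = cfcₙ (fun t => g t * g t) b :=
      (cfcₙ_mul g g b hgc.continuousOn hg0 hgc.continuousOn hg0).symm
    set x := cfcₙ g b * s with hx_def
    have hxx : star x * x = star s * cfcₙ (fun t => g t * g t) b * s := by
      rw [hx_def, star_mul, hsa_g, ← hsq]; noncomm_ring
    have hble : cfc (fun t => g t * g t) ((b : Unitization ℂ A)) ≤
        cfc (fun t => δ⁻¹ * h t) ((b : Unitization ℂ A)) := by
      refine cfc_mono (fun t _ => ?_) ((hgc.mul hgc).continuousOn)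
        ((continuous_const.mul hhc).continuousOn)
      rw [hmul t]
      calc h t / max t δ ≤ h t / δ :=
            div_le_div_of_nonneg_left (hhnn t) hδ (le_max_right t δ)
        _ = δ⁻¹ * h t := by rw [div_eq_inv_mul]
    have hcast1 : ((cfcₙ (fun t => g t * g t) b : A) : Unitization ℂ A) =
        cfc (fun t => g t * g t) ((b : Unitization ℂ A)) :=
      Unitization.real_cfcₙ_eq_cfc_inr b _ (by simp [hg0])
    have hcast2 : ((cfcₙ h b : A) : Unitization ℂ A) = cfc h ((b : Unitization ℂ A)) :=
      Unitization.real_cfcₙ_eq_cfc_inr b h hh0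
    set c := star s * cfcₙ h b * s with hc_def
    have hineq : ((star x * x : A) : Unitization ℂ A) ≤ δ⁻¹ • ((c : A) : Unitization ℂ A) := by
      rw [hxx, hc_def]
      simp only [Unitization.inr_mul, Unitization.inr_star]
      rw [hcast1, hcast2]
      calc star (s : Unitization ℂ A) * cfc (fun t => g t * g t) ((b : Unitization ℂ A)) * s
          ≤ star (s : Unitization ℂ A) * cfc (fun t => δ⁻¹ * h t) ((b : Unitization ℂ A)) * s :=
            star_left_conjugate_le_conjugate hble _
        _ = δ⁻¹ • (star (s : Unitization ℂ A) * cfc h ((b : Unitization ℂ A)) * s) := by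
            rw [cfc_const_mul δ⁻¹ h ((b : Unitization ℂ A)) hhc.continuousOn]
            simp [mul_smul_comm, smul_mul_assoc]
    have hpos : (0 : Unitization ℂ A) ≤ ((star x * x : A) : Unitization ℂ A) := by
      rw [Unitization.inr_mul, Unitization.inr_star]
      exact star_mul_self_nonneg _
    have hnorm := CStarAlgebra.norm_le_norm_of_nonneg_of_le hpos hineq
    rw [Unitization.norm_inr, norm_smul] at hnorm
    rw [Unitization.norm_inr] at hnorm
    calc ‖x‖ ^ 2 = ‖star x * x‖ := by rw [sq, ← CStarRing.norm_star_mul_self]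
      _ ≤ ‖δ⁻¹‖ * ‖c‖ := hnorm
      _ = δ⁻¹ * ‖c‖ := by rw [Real.norm_of_nonneg (by positivity)]

/-- Rørdam's lemma on Cuntz subequivalence: if `a = s* (b-δ)₊ s` then `a = x* b x` with
`‖x‖ ≤ δ^(-1/2)`; approximate version likewise. Here `(b-δ)₊` is obtained by applying
`t ↦ max (t - δ) 0` to `b` via the (non-unital) continuous functional calculus. -/
theorem stmt_8 {A : Type*} [NonUnitalCStarAlgebra A] (a b : A)
    (hapos : ∃ y : A, a = star y * y) (hbpos : ∃ y : A, b = star y * y)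
    (ha : ‖a‖ ≤ 1) (hb : ‖b‖ ≤ 1) (δ : ℝ) (hδ : 0 < δ) :
    ((∃ s : A, a = star s * cfcₙ (fun t : ℝ => max (t - δ) 0) b * s) →
      ∃ x : A, ‖x‖ ≤ (Real.sqrt δ)⁻¹ ∧ a = star x * b * x) ∧
    ((∀ η > (0 : ℝ), ∃ s : A, ‖a - star s * cfcₙ (fun t : ℝ => max (t - δ) 0) b * s‖ < η) →
      ∀ ε > (0 : ℝ), ∃ x : A, ‖x‖ ≤ (Real.sqrt δ)⁻¹ ∧ ‖star x * b * x - a‖ < ε) := by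
  have hbsa : IsSelfAdjoint b := by
    obtain ⟨y, rfl⟩ := hbpos; exact IsSelfAdjoint.star_mul_self y
  constructor
  · rintro ⟨s, hs⟩
    obtain ⟨x, hx1, hx2⟩ := rordam_key b hbsa δ hδ s
    refine ⟨x, ?_, hs.trans hx1.symm⟩
    have h2 : ‖x‖ ^ 2 ≤ δ⁻¹ := by
      rw [← hs] at hx2
      calc ‖x‖ ^ 2 ≤ δ⁻¹ * ‖a‖ := hx2
        _ ≤ δ⁻¹ * 1 := by
            exact mul_le_mul_of_nonneg_left ha (by positivity)
        _ = δ⁻¹ := mul_one _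
    calc ‖x‖ = Real.sqrt (‖x‖ ^ 2) := (Real.sqrt_sq (norm_nonneg x)).symm
      _ ≤ Real.sqrt δ⁻¹ := Real.sqrt_le_sqrt h2
      _ = (Real.sqrt δ)⁻¹ := Real.sqrt_inv δ
  · intro hap ε hε
    obtain ⟨s, hs⟩ := hap (ε/2) (by linarith)
    obtain ⟨x, hx1, hx2⟩ := rordam_key b hbsa δ hδ s
    set c := star s * cfcₙ (fun t : ℝ => max (t - δ) 0) b * s with hc_def
    set u : ℝ := 1 + ε/2 with hu_def
    have hu1 : (1:ℝ) ≤ u := by rw [hu_def]; linarith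
    have hu0 : (0:ℝ) < u := by linarith
    have hcn : ‖c‖ ≤ u := by
      calc ‖c‖ = ‖a - (a - c)‖ := by rw [sub_sub_cancel]
        _ ≤ ‖a‖ + ‖a - c‖ := norm_sub_le _ _
        _ ≤ 1 + ε/2 := by have := hs.le; gcongr
    set r : ℝ := (Real.sqrt u)⁻¹ with hr_def
    have hr0 : 0 ≤ r := by positivity
    have hrsq : r ^ 2 = u⁻¹ := by
      rw [hr_def, inv_pow, Real.sq_sqrt hu0.le]
    refine ⟨r • x, ?_, ?_⟩
    · have hx : ‖x‖ ≤ Real.sqrt (δ⁻¹ * u) := by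
        rw [← Real.sqrt_sq (norm_nonneg x)]
        exact Real.sqrt_le_sqrt (hx2.trans (by gcongr))
      calc ‖r • x‖ = r * ‖x‖ := by
            rw [norm_smul, Real.norm_of_nonneg hr0]
        _ ≤ r * Real.sqrt (δ⁻¹ * u) := by gcongr
        _ = (Real.sqrt u)⁻¹ * (Real.sqrt δ⁻¹ * Real.sqrt u) := by
            rw [hr_def, Real.sqrt_mul (by positivity)]
        _ = Real.sqrt δ⁻¹ := by
            field_simp
        _ = (Real.sqrt δ)⁻¹ := Real.sqrt_inv δ
    · have hsmul : star (r • x) * b * (r • x) = r ^ 2 • c := by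
        rw [star_smul, star_trivial, smul_mul_assoc, smul_mul_assoc, mul_smul_comm,
          smul_smul, ← sq, hx1]
      rw [hsmul, hrsq]
      have h1 : ‖u⁻¹ • c - c‖ ≤ ε / 2 := by
        have : u⁻¹ • c - c = (u⁻¹ - 1) • c := by rw [sub_smul, one_smul]
        rw [this, norm_smul, Real.norm_eq_abs,
          abs_of_nonpos (by linarith [inv_le_one_of_one_le₀ hu1])]
        calc -(u⁻¹ - 1) * ‖c‖ = (1 - u⁻¹) * ‖c‖ := by ring_nf
          _ ≤ (1 - u⁻¹) * u := by
              have : (0:ℝ) ≤ 1 - u⁻¹ := by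
                have := inv_le_one_of_one_le₀ hu1; linarith
              gcongr
          _ = u - 1 := by field_simp
          _ = ε/2 := by rw [hu_def]; ring
      calc ‖u⁻¹ • c - a‖ ≤ ‖u⁻¹ • c - c‖ + ‖c - a‖ := norm_sub_le_norm_sub_add_norm_sub _ _ _
        _ < ε/2 + ε/2 := by
            have h2 : ‖c - a‖ < ε/2 := by rw [norm_sub_rev]; exact hs
            exact add_lt_add_of_le_of_lt h1 h2
        _ = ε := by ring
end

section
/- Let A be a unital C*-algebra with the strong Dixmier property: for every a ∈ A and every ε > 0 there are n ∈ ℕ, unitaries u₁, …, uₙ ∈ A, nonnegative reals λ₁, …, λₙ with λ₁ + ⋯ + λₙ = 1, and μ ∈ ℂ such that ‖μ·1 − ∑ᵢ λᵢ uᵢ* a uᵢ‖ < ε. Then A has at most one tracial state: any two tracial states on A are equal. -/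
/-!
A tracial functional is invariant under unitary conjugation, hence takes the value `f a` on every
convex combination of unitary conjugates of `a`; a positive functional on a C⋆-algebra is also
bounded. So if such a combination is within `ε` of the scalar `μ • 1`, every tracial state
`f` satisfies `‖μ - f a‖ ≤ C_f ε`, and the strong Dixmier property pins `f a` down independently
of `f`.
-/

open scoped ComplexOrder NNReal

section TracialFunctional

variable {A : Type*} [CStarAlgebra A]

lemma apply_star_mul_mul_eq_of_mem_unitary (f : A →ₗ[ℂ] ℂ)
    (htr : ∀ a b : A, f (a * b) = f (b * a)) {u : A} (hu : u ∈ unitary A) (a : A) :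
    f (star u * a * u) = f a := by
  rw [htr, ← mul_assoc, Unitary.mul_star_self_of_mem hu, one_mul]

lemma apply_sum_smul_unitary_conj {ι : Type*} [Fintype ι] (f : A →ₗ[ℂ] ℂ)
    (htr : ∀ a b : A, f (a * b) = f (b * a)) {u : ι → A} (hu : ∀ i, u i ∈ unitary A)
    {lam : ι → ℝ} (hlam : ∑ i, lam i = 1) (a : A) :
    f (∑ i, lam i • (star (u i) * a * u i)) = f a := by
  simp only [map_sum, ← Complex.coe_smul, map_smul,
    apply_star_mul_mul_eq_of_mem_unitary f htr (hu _), smul_eq_mul, ← Finset.sum_mul]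
  rw [← Complex.ofReal_sum, hlam, Complex.ofReal_one, one_mul]

lemma exists_norm_apply_le_of_apply_star_mul_self (f : A →ₗ[ℂ] ℂ)
    (hpos : ∀ x : A, ∃ r : ℝ, 0 ≤ r ∧ f (star x * x) = (r : ℂ)) :
    ∃ C : ℝ≥0, ∀ x, ‖f x‖ ≤ C * ‖x‖ := by
  let := CStarAlgebra.spectralOrder A
  have := CStarAlgebra.spectralOrderedRing A
  refine PositiveLinearMap.exists_norm_apply_le (.mk₀ f fun x hx => ?_)
  obtain ⟨s, rfl⟩ := CStarAlgebra.nonneg_iff_eq_star_mul_self.mp hx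
  obtain ⟨r, hr, hfr⟩ := hpos s
  rw [hfr]
  exact_mod_cast hr

lemma norm_sub_apply_le_of_unitary_average {ι : Type*} [Fintype ι] (f : A →ₗ[ℂ] ℂ)
    (h1 : f 1 = 1) (htr : ∀ a b : A, f (a * b) = f (b * a)) {C : ℝ}
    (hC : ∀ x, ‖f x‖ ≤ C * ‖x‖) {u : ι → A} (hu : ∀ i, u i ∈ unitary A)
    {lam : ι → ℝ} (hlam : ∑ i, lam i = 1) (a : A) (μ : ℂ) :
    ‖μ - f a‖ ≤ C * ‖μ • (1 : A) - ∑ i, lam i • (star (u i) * a * u i)‖ := by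
  convert hC _ using 2
  rw [map_sub, map_smul, h1, smul_eq_mul, mul_one, apply_sum_smul_unitary_conj f htr hu hlam]

end TracialFunctional

/-- A unital C*-algebra with the strong Dixmier property has at most one tracial state. -/
theorem stmt_12 {A : Type*} [CStarAlgebra A]
    (hDix : ∀ a : A, ∀ ε > (0 : ℝ), ∃ (n : ℕ) (u : Fin n → A) (lam : Fin n → ℝ) (μ : ℂ),
      (∀ i, u i ∈ unitary A) ∧ (∀ i, 0 ≤ lam i) ∧ (∑ i, lam i) = 1 ∧
      ‖μ • (1 : A) - ∑ i, lam i • (star (u i) * a * u i)‖ < ε)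
    (τ σ : A →ₗ[ℂ] ℂ)
    (hτ1 : τ 1 = 1) (hτpos : ∀ x : A, ∃ r : ℝ, 0 ≤ r ∧ τ (star x * x) = (r : ℂ))
    (hτtr : ∀ a b : A, τ (a * b) = τ (b * a))
    (hσ1 : σ 1 = 1) (hσpos : ∀ x : A, ∃ r : ℝ, 0 ≤ r ∧ σ (star x * x) = (r : ℂ))
    (hσtr : ∀ a b : A, σ (a * b) = σ (b * a)) :
    τ = σ := by
  obtain ⟨Cτ, hCτ⟩ := exists_norm_apply_le_of_apply_star_mul_self τ hτpos
  obtain ⟨Cσ, hCσ⟩ := exists_norm_apply_le_of_apply_star_mul_self σ hσpos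
  ext a
  refine eq_of_forall_dist_le fun ε hε => ?_
  set δ := ε / (Cτ + Cσ + 1)
  obtain ⟨n, u, lam, μ, hu, -, hlam, hz⟩ := hDix a δ (by positivity)
  have hτμ := norm_sub_apply_le_of_unitary_average τ hτ1 hτtr hCτ hu hlam a μ
  have hσμ := norm_sub_apply_le_of_unitary_average σ hσ1 hσtr hCσ hu hlam a μ
  calc dist (τ a) (σ a) ≤ ‖μ - τ a‖ + ‖μ - σ a‖ := by
        simpa only [dist_comm _ μ, dist_eq_norm] using dist_triangle_right (τ a) (σ a) μ
    _ ≤ (Cτ + Cσ) * δ := by nlinarith [Cτ.2, Cσ.2]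
    _ ≤ ε := by
        rw [mul_div_left_comm]
        exact mul_le_of_le_one_right hε.le ((div_le_one (by positivity)).mpr (by linarith))
end

section
/- Let A be a unital C*-algebra, let n ≥ 1, and let 0 ≤ r < 1. Suppose that for every a ∈ A there exist unitaries u₁, …, uₙ ∈ A and μ ∈ ℂ with |μ| ≤ ‖a‖ such that ‖μ·1 − (1/n)·∑ᵢ uᵢ* a uᵢ‖ ≤ r·‖a‖. Then A has the strong Dixmier property with uniform averages: for every a ∈ A and every ε > 0 there exist k ≥ 1, unitaries v₁, …, v_k ∈ A, and μ ∈ ℂ such that ‖μ·1 − (1/k)·∑ⱼ vⱼ* a vⱼ‖ < ε. -/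
/-- If averages over `n` unitary conjugates uniformly contract distances to the scalars by a
factor `r < 1`, then the algebra has the strong Dixmier property with uniform averages. -/
theorem stmt_14 {A : Type*} [CStarAlgebra A] (n : ℕ) (hn : 1 ≤ n)
    (r : ℝ) (hr0 : 0 ≤ r) (hr1 : r < 1)
    (h : ∀ a : A, ∃ (u : Fin n → A) (μ : ℂ), (∀ i, u i ∈ unitary A) ∧ ‖μ‖ ≤ ‖a‖ ∧
      ‖μ • (1 : A) - (n : ℝ)⁻¹ • ∑ i, star (u i) * a * u i‖ ≤ r * ‖a‖) :
    ∀ a : A, ∀ ε > (0 : ℝ), ∃ (k : ℕ) (v : Fin k → A) (μ : ℂ), 1 ≤ k ∧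
      (∀ i, v i ∈ unitary A) ∧
      ‖μ • (1 : A) - (k : ℝ)⁻¹ • ∑ i, star (v i) * a * v i‖ < ε := by
  intro a ε hε
  have key : ∀ m : ℕ, ∃ (k : ℕ) (v : Fin k → A) (μ : ℂ), 1 ≤ k ∧
      (∀ i, v i ∈ unitary A) ∧
      ‖μ • (1 : A) - (k : ℝ)⁻¹ • ∑ i, star (v i) * a * v i‖ ≤ r ^ m * ‖a‖ := by
    intro m
    induction m with
    | zero =>
      refine ⟨1, fun _ => 1, 0, le_refl 1, fun _ => one_mem _, ?_⟩
      simp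
    | succ m ih =>
      obtain ⟨k, v, μ, hk, hv, hb⟩ := ih
      set S : A := ∑ i, star (v i) * a * v i with hS
      set b : A := μ • (1 : A) - (k : ℝ)⁻¹ • S with hbdef
      obtain ⟨u, ν, hu, -, hub⟩ := h b
      have huu : ∀ j, star (u j) * u j = 1 := fun j => (Unitary.mem_iff.mp (hu j)).1
      refine ⟨k * n, fun p => v (finProdFinEquiv.symm p).1 * u (finProdFinEquiv.symm p).2,
        μ - ν, Nat.one_le_iff_ne_zero.mpr (by positivity), fun p => mul_mem (hv _) (hu _), ?_⟩
      have hT : ((k * n : ℕ) : ℝ)⁻¹ • ∑ p : Fin (k * n),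
          star (v (finProdFinEquiv.symm p).1 * u (finProdFinEquiv.symm p).2) * a *
            (v (finProdFinEquiv.symm p).1 * u (finProdFinEquiv.symm p).2)
          = (n : ℝ)⁻¹ • ∑ j, star (u j) * ((k : ℝ)⁻¹ • S) * u j := by
        rw [← Equiv.sum_comp finProdFinEquiv (fun p => star (v (finProdFinEquiv.symm p).1 *
          u (finProdFinEquiv.symm p).2) * a * (v (finProdFinEquiv.symm p).1 * u (finProdFinEquiv.symm p).2))]
        simp only [Equiv.symm_apply_apply]
        rw [Fintype.sum_prod_type]
        rw [Finset.sum_comm]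
        push_cast
        rw [mul_inv, mul_comm ((k:ℝ)⁻¹), ← smul_smul]
        congr 1
        rw [Finset.smul_sum]
        refine Finset.sum_congr rfl fun j _ => ?_
        rw [mul_smul_comm, smul_mul_assoc]
        congr 1
        rw [hS]
        simp only [Finset.mul_sum, Finset.sum_mul]
        refine Finset.sum_congr rfl fun i _ => ?_
        simp [mul_assoc, star_mul]
      have hub' : (n : ℝ)⁻¹ • ∑ j, star (u j) * b * u j
          = μ • (1 : A) - (n : ℝ)⁻¹ • ∑ j, star (u j) * ((k : ℝ)⁻¹ • S) * u j := by
        have : ∀ j, star (u j) * b * u j = μ • (1 : A) - star (u j) * ((k : ℝ)⁻¹ • S) * u j := by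
          intro j
          rw [hbdef, mul_sub, sub_mul, mul_smul_comm, smul_mul_assoc, mul_one, huu j]
        simp only [this, Finset.sum_sub_distrib, smul_sub]
        congr 1
        rw [Finset.sum_const, Finset.card_univ, Fintype.card_fin]
        rw [← Nat.cast_smul_eq_nsmul ℝ n (μ • (1:A))]
        rw [smul_smul, inv_mul_cancel₀ (by positivity : (n:ℝ) ≠ 0), one_smul]

      rw [hT]
      have heq : (μ - ν) • (1 : A) - (n : ℝ)⁻¹ • ∑ j, star (u j) * ((k : ℝ)⁻¹ • S) * u j
          = -(ν • (1 : A) - (n : ℝ)⁻¹ • ∑ j, star (u j) * b * u j) := by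
        rw [hub', sub_smul]
        abel
      rw [heq, norm_neg, pow_succ, mul_comm (r ^ m) r, mul_assoc]
      exact hub.trans (by nlinarith [norm_nonneg b])
  obtain ⟨m, hm⟩ := exists_pow_lt_of_lt_one (show (0:ℝ) < ε / (‖a‖ + 1) by positivity) hr1
  obtain ⟨k, v, μ, hk, hv, hbound⟩ := key m
  refine ⟨k, v, μ, hk, hv, lt_of_le_of_lt hbound ?_⟩
  have h1 : r ^ m * ‖a‖ ≤ r ^ m * (‖a‖ + 1) := by
    have := norm_nonneg a; nlinarith [pow_nonneg hr0 m]
  have h2 : r ^ m * (‖a‖ + 1) < ε := (lt_div_iff₀ (by positivity)).mp hm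
  linarith
end

section
/- Let A be a C*-algebra such that for all nonzero positive elements c, d ∈ A and every η > 0 there exists x ∈ A with ‖x·c·x* − d‖ < η (this holds in particular when A is purely infinite and simple). Then for every positive a ∈ A with 1/2 < ‖a‖ ≤ 1, every positive b ∈ A with ‖b‖ ≤ 1, and every ε > 0 there exists z ∈ A with ‖z‖ ≤ √2 and ‖z·a·z* − b‖ < ε. -/
/-!
Pick `1/2 < α < ‖a‖`. The cut-down `(a - α)₊` is a nonzero positive element, so by hypothesis
some `x` has `x (a - α)₊ x*` within `min ε (2α - 1)` of `b`; in particular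
`‖x (a - α)₊ x*‖ ≤ ‖b‖ + 2α - 1 ≤ 2α`. Functional calculus gives `w = r(a)` with
`w a w* = (a - α)₊` and `w w* ≤ α⁻¹ (a - α)₊` (take `r(t) = √((t - α)₊ / max(t, α))`), so
`z = x w` satisfies `z a z* = x (a - α)₊ x*` and `‖z‖² = ‖x w w* x*‖ ≤ α⁻¹ ‖x (a - α)₊ x*‖ ≤ 2`.
-/

noncomputable def cutDown {A : Type*} [NonUnitalCStarAlgebra A] (α : ℝ) (a : A) : A :=
  cfcₙ (fun t : ℝ => max (t - α) 0) a

lemma Real.exists_continuous_conj_id_eq_max_sub {α : ℝ} (hα : 0 < α) :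
    ∃ r : ℝ → ℝ, Continuous r ∧ r 0 = 0 ∧
      ∀ t, r t * t * r t = max (t - α) 0 ∧ r t * r t ≤ α⁻¹ * max (t - α) 0 := by
  have hden (t : ℝ) : 0 < max t α := lt_max_of_lt_right hα
  refine ⟨fun t => √(max (t - α) 0 / max t α), ?_, by simp [hα.le], fun t => ?_⟩
  · fun_prop (disch := exact fun t => (hden t).ne')
  have hsq : √(max (t - α) 0 / max t α) * √(max (t - α) 0 / max t α)
      = max (t - α) 0 / max t α := Real.mul_self_sqrt (by positivity)
  refine ⟨?_, ?_⟩
  · rw [mul_right_comm, hsq]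
    rcases le_or_gt t α with htα | htα
    · simp [htα]
    · rw [max_eq_left htα.le, div_mul_cancel₀ _ (hα.trans htα).ne']
  · rw [hsq, ← div_eq_inv_mul]
    exact div_le_div_of_nonneg_left (le_max_right _ _) hα (le_max_right _ _)

section

variable {A : Type*} [NonUnitalCStarAlgebra A] [PartialOrder A] [StarOrderedRing A]

lemma norm_mem_quasispectrum_of_nonneg {a : A} (ha : 0 ≤ a) : ‖a‖ ∈ quasispectrum ℝ a := by
  rw [Unitization.quasispectrum_eq_spectrum_inr' ℝ ℂ a, ← Unitization.norm_inr (𝕜 := ℂ)]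
  exact CStarAlgebra.norm_mem_spectrum_of_nonneg (Unitization.inr_nonneg_iff.mpr ha)

lemma cutDown_nonneg (α : ℝ) (a : A) : 0 ≤ cutDown α a :=
  cfcₙ_nonneg fun _ _ => le_max_right _ _

lemma cutDown_ne_zero {a : A} (ha : 0 ≤ a) {α : ℝ} (hα₀ : 0 ≤ α) (hα : α < ‖a‖) :
    cutDown α a ≠ 0 := by
  intro h0
  have := norm_apply_le_norm_cfcₙ (fun t : ℝ => max (t - α) 0) a
    (norm_mem_quasispectrum_of_nonneg ha) (hf₀ := by simpa using hα₀)
  rw [← cutDown, h0, norm_zero, max_eq_left (by linarith), Real.norm_eq_abs, abs_le] at this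
  linarith [this.2]

lemma norm_mul_sq_le_of_mul_star_le {w c : A} (h : w * star w ≤ c) (x : A) :
    ‖x * w‖ ^ 2 ≤ ‖x * c * star x‖ := by
  rw [sq, ← CStarRing.norm_self_mul_star, star_mul, ← mul_assoc, mul_assoc x]
  exact CStarAlgebra.norm_le_norm_of_nonneg_of_le
    (star_right_conjugate_nonneg (mul_star_self_nonneg w) x) (star_right_conjugate_le_conjugate h x)

lemma exists_conj_eq_cutDown {a : A} (ha : IsSelfAdjoint a) {α : ℝ} (hα : 0 < α) :
    ∃ w : A, w * a * star w = cutDown α a ∧ w * star w ≤ α⁻¹ • cutDown α a := by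
  obtain ⟨r, hr, hr0, hrr⟩ := Real.exists_continuous_conj_id_eq_max_sub hα
  refine ⟨cfcₙ r a, ?_, ?_⟩
  · rw [(cfcₙ_predicate r a : IsSelfAdjoint _).star_eq, cutDown,
      ← cfcₙ_congr (fun t _ => (hrr t).1), cfcₙ_mul _ r a (hf0 := by simp [hr0]),
      cfcₙ_mul r _ a, cfcₙ_id' ℝ a]
  · rw [(cfcₙ_predicate r a : IsSelfAdjoint _).star_eq, cutDown, ← cfcₙ_mul r r a,
      ← cfcₙ_smul α⁻¹ (fun t : ℝ => max (t - α) 0) a (h0 := by simp [hα.le])]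
    exact cfcₙ_mono (fun t _ => (hrr t).2) (hg0 := by simp [hα.le])

end

theorem stmt_16_general {A : Type*} [NonUnitalCStarAlgebra A]
    (h : ∀ c d : A, (∃ y : A, c = star y * y) → (∃ y : A, d = star y * y) →
      c ≠ 0 → d ≠ 0 → ∀ η > (0 : ℝ), ∃ x : A, ‖x * c * star x - d‖ < η)
    (a b : A) (hapos : ∃ y : A, a = star y * y) (hbpos : ∃ y : A, b = star y * y)
    (ha1 : 1 / 2 < ‖a‖) (hb : ‖b‖ ≤ 1) :
    ∀ ε > (0 : ℝ), ∃ z : A, ‖z‖ ≤ Real.sqrt 2 ∧ ‖z * a * star z - b‖ < ε := by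
  let _ := CStarAlgebra.spectralOrder A
  have := CStarAlgebra.spectralOrderedRing A
  intro ε hε
  rcases eq_or_ne b 0 with rfl | hb0
  · exact ⟨0, by simp, by simpa using hε⟩
  have ha : 0 ≤ a := CStarAlgebra.nonneg_iff_eq_star_mul_self.mpr hapos
  obtain ⟨α, hα, hαa⟩ := exists_between ha1
  obtain ⟨x, hx⟩ := h (cutDown α a) b (CStarAlgebra.nonneg_iff_eq_star_mul_self.mp
    (cutDown_nonneg α a)) hbpos (cutDown_ne_zero ha (by linarith) hαa) hb0
    (min ε (2 * α - 1)) (lt_min hε (by linarith))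
  obtain ⟨w, hwa, hww⟩ := exists_conj_eq_cutDown ha.isSelfAdjoint (by linarith : 0 < α)
  have hconj : x * w * a * star (x * w) = x * cutDown α a * star x := by
    rw [star_mul, ← hwa]; noncomm_ring
  refine ⟨x * w, Real.le_sqrt_of_sq_le ?_, hconj ▸ hx.trans_le (min_le_left _ _)⟩
  have hxc : ‖x * cutDown α a * star x‖ ≤ 2 * α := by
    linarith [norm_le_norm_add_norm_sub' (x * cutDown α a * star x) b, min_le_right ε (2 * α - 1)]
  calc ‖x * w‖ ^ 2 ≤ ‖x * (α⁻¹ • cutDown α a) * star x‖ := norm_mul_sq_le_of_mul_star_le hww x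
    _ = α⁻¹ * ‖x * cutDown α a * star x‖ := by
      rw [mul_smul_comm, smul_mul_assoc, norm_smul, norm_inv, Real.norm_of_nonneg (by linarith)]
    _ ≤ α⁻¹ * (2 * α) := by gcongr
    _ = 2 := by field_simp

/-- In a C*-algebra in which every nonzero positive element Cuntz-dominates every nonzero
positive element, any positive contraction of norm `> 1/2` dominates any positive contraction
with witnesses of norm at most `√2`. -/
theorem stmt_16 {A : Type*} [NonUnitalCStarAlgebra A]
    (h : ∀ c d : A, (∃ y : A, c = star y * y) → (∃ y : A, d = star y * y) →
      c ≠ 0 → d ≠ 0 → ∀ η > (0 : ℝ), ∃ x : A, ‖x * c * star x - d‖ < η)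
    (a b : A) (hapos : ∃ y : A, a = star y * y) (hbpos : ∃ y : A, b = star y * y)
    (ha1 : 1 / 2 < ‖a‖) (ha2 : ‖a‖ ≤ 1) (hb : ‖b‖ ≤ 1) :
    ∀ ε > (0 : ℝ), ∃ z : A, ‖z‖ ≤ Real.sqrt 2 ∧ ‖z * a * star z - b‖ < ε :=
  stmt_16_general h a b hapos hbpos ha1 hb
end

section
/- Let A be a unital C*-algebra, let ε > 0 and 0 < δ ≤ ε², let e ∈ A with 0 ≤ e ≤ 1, and let a ∈ A with ‖a‖ ≤ 1 and ‖(1 − e)·a‖ < δ. Then there exist e', a' ∈ A with 0 ≤ e' ≤ 1, ‖a'‖ ≤ 1, ‖e − e'‖ ≤ 2ε, ‖a − a'‖ < ε, and e'·a' = a'. -/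
/-!
With `r(t) = 1 - (1 - t) / max (1 - t) ε` and `c(t) = min 1 (t + ε)`, take `e' = c(e)` and
`a' = r(e) a`. The ramp `r` vanishes below `1 - ε`, where `c` is not yet `1`, so `c r = r` and
`e' a' = a'`; moving `e` to `c(e)` costs at most `ε`. Since `1 - r(t) = h(t) (1 - t)` with
`h(t) = (max (1 - t) ε)⁻¹ ≤ ε⁻¹`, we get `a - a' = h(e) (1 - e) a`, hence
`‖a - a'‖ ≤ ‖(1 - e) a‖ / ε < δ / ε ≤ ε`.
-/

open CFC

namespace LocalUnit

noncomputable def ramp (ε t : ℝ) : ℝ := 1 - (1 - t) / max (1 - t) ε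

def cap (ε t : ℝ) : ℝ := min 1 (t + ε)

variable {ε : ℝ}

lemma max_one_sub_pos (hε : 0 < ε) (t : ℝ) : 0 < max (1 - t) ε :=
  lt_max_of_lt_right hε

lemma continuous_ramp (hε : 0 < ε) : Continuous (ramp ε) :=
  continuous_const.sub <|
    (continuous_const.sub continuous_id).div (by fun_prop) fun t => (max_one_sub_pos hε t).ne'

lemma continuous_cap : Continuous (cap ε) := by
  unfold cap; fun_prop

lemma one_sub_ramp (t : ℝ) : 1 - ramp ε t = (max (1 - t) ε)⁻¹ * (1 - t) := by
  rw [ramp, sub_sub_cancel, div_eq_inv_mul]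

lemma ramp_mem_Icc (hε : 0 < ε) {t : ℝ} (ht : t ≤ 1) : ramp ε t ∈ Set.Icc 0 1 := by
  have h₀ : 0 ≤ (1 - t) / max (1 - t) ε := div_nonneg (by linarith) (max_one_sub_pos hε t).le
  have h₁ : (1 - t) / max (1 - t) ε ≤ 1 :=
    div_le_one_of_le₀ (le_max_left _ _) (max_one_sub_pos hε t).le
  constructor <;> simp only [ramp] <;> linarith

lemma cap_mul_ramp (hε : 0 ≤ ε) (t : ℝ) : cap ε t * ramp ε t = ramp ε t := by
  rcases le_or_gt (1 - t) ε with hle | hlt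
  · rw [cap, min_eq_left (by linarith), one_mul]
  · rw [ramp, max_eq_left hlt.le, div_self (by linarith), sub_self, mul_zero]

lemma cap_le_one (t : ℝ) : cap ε t ≤ 1 := min_le_left _ _

lemma cap_nonneg (hε : 0 ≤ ε) {t : ℝ} (ht : 0 ≤ t) : 0 ≤ cap ε t :=
  le_min zero_le_one (by linarith)

lemma abs_sub_cap_le (hε : 0 ≤ ε) {t : ℝ} (ht : t ≤ 1) : |t - cap ε t| ≤ ε := by
  rw [abs_le, cap]
  rcases le_total 1 (t + ε) with h | h
  · rw [min_eq_left h]; constructor <;> linarith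
  · rw [min_eq_right h]; constructor <;> linarith

end LocalUnit

open LocalUnit

section CStarAlgebra

variable {A : Type*} [CStarAlgebra A] {ε : ℝ} {e : A}

lemma one_sub_cfc_ramp (hε : 0 < ε) (he : IsSelfAdjoint e) :
    1 - cfc (ramp ε) e = cfc (fun t => (max (1 - t) ε)⁻¹) e * (1 - e) := by
  have hcont : Continuous fun t : ℝ => (max (1 - t) ε)⁻¹ :=
    Continuous.inv₀ (by fun_prop) fun t => (max_one_sub_pos hε t).ne'
  have h1e : 1 - e = cfc (fun t : ℝ => 1 - t) e := by
    rw [cfc_sub _ _ e, cfc_const_one ℝ e, cfc_id' ℝ e]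
  have h1r : 1 - cfc (ramp ε) e = cfc (fun t => 1 - ramp ε t) e := by
    rw [cfc_sub _ _ e (by fun_prop) (continuous_ramp hε).continuousOn, cfc_const_one ℝ e]
  rw [h1e, h1r, ← cfc_mul _ _ e hcont.continuousOn]
  exact cfc_congr fun t _ => one_sub_ramp t

lemma norm_cfc_inv_max_le (hε : 0 < ε) (e : A) :
    ‖cfc (fun t => (max (1 - t) ε)⁻¹) e‖ ≤ ε⁻¹ :=
  norm_cfc_le (by positivity) fun t _ => by
    rw [Real.norm_eq_abs, abs_of_pos (inv_pos.mpr (max_one_sub_pos hε t))]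
    exact inv_anti₀ hε (le_max_right _ _)

lemma norm_sub_cfc_ramp_mul_le (hε : 0 < ε) (he : IsSelfAdjoint e) (a : A) :
    ‖a - cfc (ramp ε) e * a‖ ≤ ε⁻¹ * ‖(1 - e) * a‖ := by
  have : a - cfc (ramp ε) e * a = cfc (fun t => (max (1 - t) ε)⁻¹) e * ((1 - e) * a) := by
    rw [← mul_assoc, ← one_sub_cfc_ramp hε he, sub_mul, one_mul]
  rw [this]
  exact (norm_mul_le _ _).trans <|
    mul_le_mul_of_nonneg_right (norm_cfc_inv_max_le hε e) (norm_nonneg _)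

lemma cfc_cap_mul_cfc_ramp (hε : 0 < ε) (e : A) :
    cfc (cap ε) e * cfc (ramp ε) e = cfc (ramp ε) e := by
  rw [← cfc_mul _ _ e continuous_cap.continuousOn (continuous_ramp hε).continuousOn]
  exact cfc_congr fun t _ => cap_mul_ramp hε.le t

variable [PartialOrder A] [StarOrderedRing A]

lemma norm_cfc_ramp_le_one (hε : 0 < ε) (he : IsSelfAdjoint e) (he₁ : e ≤ 1) :
    ‖cfc (ramp ε) e‖ ≤ 1 := by
  refine norm_cfc_le zero_le_one fun t ht => ?_
  have := ramp_mem_Icc hε (((CFC.le_one_iff e).mp he₁) t ht)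
  rw [Real.norm_eq_abs, abs_le]
  exact ⟨by linarith [this.1], this.2⟩

lemma norm_sub_cfc_cap_le (hε : 0 ≤ ε) (he : IsSelfAdjoint e) (he₁ : e ≤ 1) :
    ‖e - cfc (cap ε) e‖ ≤ ε := by
  nth_rw 1 [← cfc_id' ℝ e]
  rw [← cfc_sub _ _ e (by fun_prop) continuous_cap.continuousOn]
  exact norm_cfc_le hε fun t ht => abs_sub_cap_le hε ((CFC.le_one_iff e).mp he₁ t ht)

theorem exists_local_unit_approx (hε : 0 < ε) (he₀ : 0 ≤ e) (he₁ : e ≤ 1) (a : A) :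
    ∃ e' a' : A, 0 ≤ e' ∧ e' ≤ 1 ∧ ‖a'‖ ≤ ‖a‖ ∧ ‖e - e'‖ ≤ ε ∧
      ‖a - a'‖ ≤ ε⁻¹ * ‖(1 - e) * a‖ ∧ e' * a' = a' := by
  have he : IsSelfAdjoint e := .of_nonneg he₀
  refine ⟨cfc (cap ε) e, cfc (ramp ε) e * a, ?_, ?_, ?_, norm_sub_cfc_cap_le hε.le he he₁,
    norm_sub_cfc_ramp_mul_le hε he a, ?_⟩
  · exact cfc_nonneg fun t ht => cap_nonneg hε.le (spectrum_nonneg_of_nonneg he₀ ht)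
  · exact cfc_le_one _ e fun t _ => cap_le_one t
  · calc ‖cfc (ramp ε) e * a‖ ≤ ‖cfc (ramp ε) e‖ * ‖a‖ := norm_mul_le _ _
      _ ≤ ‖a‖ := mul_le_of_le_one_left (norm_nonneg a) (norm_cfc_ramp_le_one hε he he₁)
  · rw [← mul_assoc, cfc_cap_mul_cfc_ramp hε]

end CStarAlgebra

theorem stmt_17_general {A : Type*} [CStarAlgebra A] (ε δ : ℝ) (hε : 0 < ε)
    (hδ : δ ≤ ε ^ 2)
    (e : A) (he0 : ∃ x : A, e = star x * x) (he1 : ∃ x : A, 1 - e = star x * x)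
    (a : A) (ha : ‖a‖ ≤ 1) (hea : ‖(1 - e) * a‖ < δ) :
    ∃ e' a' : A, (∃ x : A, e' = star x * x) ∧ (∃ x : A, 1 - e' = star x * x) ∧
      ‖a'‖ ≤ 1 ∧ ‖e - e'‖ ≤ 2 * ε ∧ ‖a - a'‖ < ε ∧ e' * a' = a' := by
  let _ : PartialOrder A := CStarAlgebra.spectralOrder A
  let _ : StarOrderedRing A := CStarAlgebra.spectralOrderedRing A
  simp only [← CStarAlgebra.nonneg_iff_eq_star_mul_self, sub_nonneg] at he0 he1 ⊢
  obtain ⟨e', a', he'0, he'1, ha', hee', haa', hunit⟩ := exists_local_unit_approx hε he0 he1 a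
  refine ⟨e', a', he'0, he'1, ha'.trans ha, by linarith, ?_, hunit⟩
  calc ‖a - a'‖ ≤ ε⁻¹ * ‖(1 - e) * a‖ := haa'
    _ < ε⁻¹ * ε ^ 2 := by gcongr; exact hea.trans_le hδ
    _ = ε := by field_simp

/-- Quantitative perturbation: if `0 ≤ e ≤ 1`, `‖a‖ ≤ 1` and `‖(1-e)a‖ < δ ≤ ε²`, then there
are `e'`, `a'` with `0 ≤ e' ≤ 1`, `‖a'‖ ≤ 1`, `‖e - e'‖ ≤ 2ε`, `‖a - a'‖ < ε` and `e' a' = a'`.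
Positivity is expressed as in the paper: `x` is positive iff `x = y* y` for some `y`, and
`e ≤ 1` means `1 - e` is positive. -/
theorem stmt_17 {A : Type*} [CStarAlgebra A] (ε δ : ℝ) (hε : 0 < ε)
    (hδ0 : 0 < δ) (hδ : δ ≤ ε ^ 2)
    (e : A) (he0 : ∃ x : A, e = star x * x) (he1 : ∃ x : A, 1 - e = star x * x)
    (a : A) (ha : ‖a‖ ≤ 1) (hea : ‖(1 - e) * a‖ < δ) :
    ∃ e' a' : A, (∃ x : A, e' = star x * x) ∧ (∃ x : A, 1 - e' = star x * x) ∧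
      ‖a'‖ ≤ 1 ∧ ‖e - e'‖ ≤ 2 * ε ∧ ‖a - a'‖ < ε ∧ e' * a' = a' :=
  stmt_17_general ε δ hε hδ e he0 he1 a ha hea
end

section
/- Let A be a C*-algebra, let a ∈ A be a positive contraction, let k ∈ ℕ, and let y₁, …, y_k ∈ A. Then there exist x₁, …, x_k ∈ A such that x₁*a x₁ + ⋯ + x_k*a x_k = y₁*(a − 1/2)₊ y₁ + ⋯ + y_k*(a − 1/2)₊ y_k and x₁*x₁ + ⋯ + x_k*x_k ≤ 2·( y₁*(a − 1/2)₊ y₁ + ⋯ + y_k*(a − 1/2)₊ y_k ) in the order of self-adjoint elements; in particular ‖x₁*x₁ + ⋯ + x_k*x_k‖ ≤ 2·‖y₁*(a − 1/2)₊ y₁ + ⋯ + y_k*(a − 1/2)₊ y_k‖. -/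
/-!
Put `g t = √((t - 1/2)₊ / max t (1/2))`. Then `g t * t * g t = (t - 1/2)₊`, and since
`max t (1/2) ≥ 1/2` also `g t ^ 2 ≤ 2 (t - 1/2)₊`. With `b = g(a)` the functional calculus turns
these into `b a b = (a - 1/2)₊` and `b² ≤ 2 (a - 1/2)₊`, and `xᵢ = b yᵢ` does the job.
-/

noncomputable def posPartHalfFactor (t : ℝ) : ℝ := √(max (t - 1/2) 0 / max t (1/2))

@[fun_prop]
lemma continuous_posPartHalfFactor : Continuous posPartHalfFactor := by
  refine Real.continuous_sqrt.comp ((by fun_prop : Continuous fun t : ℝ => max (t - 1/2) 0).div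
    (by fun_prop) fun t => ?_)
  exact (lt_of_lt_of_le (by norm_num) (le_max_right t (1/2))).ne'

@[simp]
lemma posPartHalfFactor_zero : posPartHalfFactor 0 = 0 := by
  simp [posPartHalfFactor]

lemma posPartHalfFactor_mul_self (t : ℝ) :
    posPartHalfFactor t * posPartHalfFactor t = max (t - 1/2) 0 / max t (1/2) :=
  Real.mul_self_sqrt <| div_nonneg (le_max_right _ _) (le_trans (by norm_num) (le_max_right _ _))

lemma posPartHalfFactor_mul_mul_self (t : ℝ) :
    posPartHalfFactor t * t * posPartHalfFactor t = max (t - 1/2) 0 := by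
  rw [mul_right_comm, posPartHalfFactor_mul_self]
  rcases le_or_gt t (1/2) with ht | ht
  · rw [max_eq_right (by linarith : t - 1/2 ≤ 0)]
    simp
  · rw [max_eq_left ht.le, div_mul_cancel₀ _ (by linarith)]

lemma posPartHalfFactor_mul_self_le (t : ℝ) :
    posPartHalfFactor t * posPartHalfFactor t ≤ 2 * max (t - 1/2) 0 := by
  rw [posPartHalfFactor_mul_self]
  calc max (t - 1/2) 0 / max t (1/2) ≤ max (t - 1/2) 0 / (1/2) :=
        div_le_div_of_nonneg_left (le_max_right _ _) (by norm_num) (le_max_right _ _)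
    _ = 2 * max (t - 1/2) 0 := by ring

section CStarAlgebra

variable {A : Type*} [NonUnitalCStarAlgebra A] [PartialOrder A] [StarOrderedRing A]

lemma exists_conj_eq_cfcₙ_posPart_half_and_star_mul_self_le {a : A} (ha : IsSelfAdjoint a) :
    ∃ b : A, star b * a * b = cfcₙ (fun t : ℝ => max (t - 1/2) 0) a ∧
      star b * b ≤ (2 : ℝ) • cfcₙ (fun t : ℝ => max (t - 1/2) 0) a := by
  refine ⟨cfcₙ posPartHalfFactor a, ?_, ?_⟩
  · rw [(cfcₙ_predicate posPartHalfFactor a).star_eq]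
    nth_rewrite 2 [← cfcₙ_id' ℝ a]
    rw [← cfcₙ_mul posPartHalfFactor (fun t => t) a (hf0 := posPartHalfFactor_zero),
      ← cfcₙ_mul (fun t => posPartHalfFactor t * t) _ a (hf0 := by simp)
        (hg0 := posPartHalfFactor_zero)]
    exact cfcₙ_congr fun t _ => posPartHalfFactor_mul_mul_self t
  · rw [(cfcₙ_predicate posPartHalfFactor a).star_eq,
      ← cfcₙ_mul _ _ a (hf0 := posPartHalfFactor_zero) (hg0 := posPartHalfFactor_zero),
      ← cfcₙ_smul (2 : ℝ) _ a]
    exact cfcₙ_mono (fun t _ => posPartHalfFactor_mul_self_le t) (hf0 := by simp)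

end CStarAlgebra

theorem stmt_19_general {A : Type*} [NonUnitalCStarAlgebra A]
    (a : A) (hapos : ∃ y : A, a = star y * y)
    (k : ℕ) (y : Fin k → A) :
    ∃ x : Fin k → A,
      (∑ i, star (x i) * a * x i) =
        (∑ i, star (y i) * cfcₙ (fun t : ℝ => max (t - 1/2) 0) a * y i) ∧
      (∃ w : A, (2 : ℝ) • (∑ i, star (y i) * cfcₙ (fun t : ℝ => max (t - 1/2) 0) a * y i)
          - (∑ i, star (x i) * x i) = star w * w) ∧
      ‖∑ i, star (x i) * x i‖ ≤
        2 * ‖∑ i, star (y i) * cfcₙ (fun t : ℝ => max (t - 1/2) 0) a * y i‖ := by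
  let _ := CStarAlgebra.spectralOrder A
  have := CStarAlgebra.spectralOrderedRing A
  obtain ⟨z, rfl⟩ := hapos
  obtain ⟨b, hconj, hle⟩ :=
    exists_conj_eq_cfcₙ_posPart_half_and_star_mul_self_le (IsSelfAdjoint.star_mul_self z)
  set F := cfcₙ (fun t : ℝ => max (t - 1/2) 0) (star z * z)
  have hsum_le : ∑ i, star (b * y i) * (b * y i) ≤ (2 : ℝ) • ∑ i, star (y i) * F * y i := by
    rw [Finset.smul_sum]
    gcongr with i
    simpa only [star_mul, mul_assoc, smul_mul_assoc, mul_smul_comm]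
      using star_left_conjugate_le_conjugate hle (y i)
  refine ⟨fun i => b * y i, ?_, ?_, ?_⟩
  · simp only [star_mul, ← hconj, mul_assoc]
  · exact CStarAlgebra.nonneg_iff_eq_star_mul_self.mp (sub_nonneg.mpr hsum_le)
  · calc ‖∑ i, star (b * y i) * (b * y i)‖ ≤ ‖(2 : ℝ) • ∑ i, star (y i) * F * y i‖ :=
          CStarAlgebra.norm_le_norm_of_nonneg_of_le
            (Finset.sum_nonneg fun i _ => star_mul_self_nonneg _) hsum_le
      _ = 2 * ‖∑ i, star (y i) * F * y i‖ := by rw [norm_smul, Real.norm_two]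

/-- Replacing `(a - 1/2)₊`-conjugates by `a`-conjugates with control: there exist `xᵢ` with
`∑ xᵢ* a xᵢ = ∑ yᵢ* (a - 1/2)₊ yᵢ` and `∑ xᵢ* xᵢ ≤ 2 ∑ yᵢ* (a - 1/2)₊ yᵢ` (in the order of
self-adjoint elements, expressed via positivity `∃ w, · = w* w`); in particular
`‖∑ xᵢ* xᵢ‖ ≤ 2 ‖∑ yᵢ* (a - 1/2)₊ yᵢ‖`. Here `(a - 1/2)₊` is obtained by applying
`t ↦ max (t - 1/2) 0` to `a` via the (non-unital) continuous functional calculus. -/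
theorem stmt_19 {A : Type*} [NonUnitalCStarAlgebra A]
    (a : A) (hapos : ∃ y : A, a = star y * y) (ha : ‖a‖ ≤ 1)
    (k : ℕ) (y : Fin k → A) :
    ∃ x : Fin k → A,
      (∑ i, star (x i) * a * x i) =
        (∑ i, star (y i) * cfcₙ (fun t : ℝ => max (t - 1/2) 0) a * y i) ∧
      (∃ w : A, (2 : ℝ) • (∑ i, star (y i) * cfcₙ (fun t : ℝ => max (t - 1/2) 0) a * y i)
          - (∑ i, star (x i) * x i) = star w * w) ∧
      ‖∑ i, star (x i) * x i‖ ≤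
        2 * ‖∑ i, star (y i) * cfcₙ (fun t : ℝ => max (t - 1/2) 0) a * y i‖ :=
  stmt_19_general a hapos k y
end
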